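/- arXiv:2605.10463 — 6 statements merged into one kernel-verified Lean document; each statement's English description precedes it below -/
import Mathlib

section
/- Global existence and uniqueness for the discrete gradient flow: Assume (A1), that W ∈ C²((0,∞)) with W(p) → ∞ as p → 0⁺ and W(p) → ∞ as p → ∞, and that G ∈ C([0,1]). Then for every integer N ≥ 1 and every p⁰ ∈ 𝐏_N there exists a unique differentiable p : [0,∞) → ℝ^N with p(0) = p⁰ such that p(t) ∈ 𝐏_N for all t ≥ 0 and p solves the discrete gradient-flow ODE on [0,∞); moreover t ↦ ε_N(p(t)) is nonincreasing on [0,∞). -/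
open MeasureTheory Real Set Filter

noncomputable section

/-- Discrete load: `G^N_i = N·∫_{i/N}^{(i+1)/N} G`. -/
def GN (G : ℝ → ℝ) (N : ℕ) (i : Fin N) : ℝ :=
  (N : ℝ) * ∫ x in ((i : ℝ) / N)..(((i : ℝ) + 1) / N), G x

/-- Membership in the discrete probability simplex `𝐏_N`. -/
def memPN (N : ℕ) (p : Fin N → ℝ) : Prop :=
  (∀ i, 0 < p i) ∧ (1 / (N : ℝ)) * ∑ i, p i = 1

/-- Discrete energy `ε_N(p) = (1/N) ∑ (W(p_i) − G^N_i p_i)`. -/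
def energyN (W G : ℝ → ℝ) (N : ℕ) (p : Fin N → ℝ) : ℝ :=
  (1 / (N : ℝ)) * ∑ i, (W (p i) - GN G N i * p i)

/-- Mean of `k(q)(W'(q) − G^N)` against `k(q)`. -/
def lamN (k W' G : ℝ → ℝ) (N : ℕ) (q : Fin N → ℝ) : ℝ :=
  (∑ j, k (q j) * (W' (q j) - GN G N j)) / (∑ j, k (q j))

/-- The gradient-flow vector field. -/
def VN (k W' G : ℝ → ℝ) (N : ℕ) (q : Fin N → ℝ) : Fin N → ℝ :=
  fun i => -(k (q i)) * (W' (q i) - GN G N i - lamN k W' G N q)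

/-- `p` solves the discrete gradient-flow ODE on `[0,∞)`. -/
def solvesODE (k W' G : ℝ → ℝ) (N : ℕ) (p : ℝ → Fin N → ℝ) : Prop :=
  ∀ t ∈ Set.Ici (0 : ℝ), HasDerivWithinAt p (VN k W' G N (p t)) (Set.Ici 0) t

open Topology

/- ### Auxiliary lemmas -/

lemma sum_k_pos {k : ℝ → ℝ} {N : ℕ} (hN : 1 ≤ N) (hk_pos : ∀ x > (0:ℝ), 0 < k x)
    {q : Fin N → ℝ} (hq : ∀ i, 0 < q i) : 0 < ∑ j, k (q j) := by
  haveI : Nonempty (Fin N) := ⟨⟨0, hN⟩⟩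
  exact Finset.sum_pos (fun j _ => hk_pos _ (hq j)) Finset.univ_nonempty

lemma sum_VN_eq_zero {k W' G : ℝ → ℝ} {N : ℕ} (hN : 1 ≤ N)
    (hk_pos : ∀ x > (0:ℝ), 0 < k x) {q : Fin N → ℝ} (hq : ∀ i, 0 < q i) :
    ∑ i, VN k W' G N q i = 0 := by
  have hs := sum_k_pos hN hk_pos hq
  have h1 : ∑ i, VN k W' G N q i
      = lamN k W' G N q * ∑ j, k (q j) - ∑ j, k (q j) * (W' (q j) - GN G N j) := by
    rw [Finset.mul_sum, ← Finset.sum_sub_distrib]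
    exact Finset.sum_congr rfl fun i _ => by unfold VN; ring
  rw [h1, lamN, div_mul_cancel₀ _ hs.ne', sub_self]

lemma diss_sum {k W' G : ℝ → ℝ} {N : ℕ} (hN : 1 ≤ N)
    (hk_pos : ∀ x > (0:ℝ), 0 < k x) {q : Fin N → ℝ} (hq : ∀ i, 0 < q i) :
    ∑ i, (W' (q i) - GN G N i) * VN k W' G N q i
      = -∑ i, k (q i) * (W' (q i) - GN G N i - lamN k W' G N q)^2 := by
  have hs := sum_k_pos hN hk_pos hq
  have h0 : ∑ i, k (q i) * (W' (q i) - GN G N i - lamN k W' G N q) = 0 := by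
    have h1 : ∑ i, k (q i) * (W' (q i) - GN G N i - lamN k W' G N q)
        = ∑ j, k (q j) * (W' (q j) - GN G N j) - lamN k W' G N q * ∑ j, k (q j) := by
      rw [Finset.mul_sum, ← Finset.sum_sub_distrib]
      exact Finset.sum_congr rfl fun i _ => by ring
    rw [h1, lamN, div_mul_cancel₀ _ hs.ne', sub_self]
  have h2 : ∑ i, (W' (q i) - GN G N i) * VN k W' G N q i
      = (∑ i, -(k (q i) * (W' (q i) - GN G N i - lamN k W' G N q)^2))
        + (-(lamN k W' G N q)) * ∑ i, k (q i) * (W' (q i) - GN G N i - lamN k W' G N q) := by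
    rw [Finset.mul_sum, ← Finset.sum_add_distrib]
    exact Finset.sum_congr rfl fun i _ => by unfold VN; ring
  rw [h2, h0, mul_zero, add_zero, Finset.sum_neg_distrib]

lemma mass_eq {N : ℕ} (hN : 1 ≤ N) {q : Fin N → ℝ} (hq : memPN N q) :
    ∑ i, q i = (N : ℝ) := by
  have hN0 : (0:ℝ) < N := by exact_mod_cast Nat.lt_of_lt_of_le Nat.zero_lt_one hN
  have h := hq.2
  field_simp at h
  linarith

lemma coords_le {N : ℕ} (hN : 1 ≤ N) {q : Fin N → ℝ} (hq : memPN N q) (i : Fin N) :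
    q i ≤ (N : ℝ) := by
  have h := Finset.single_le_sum (f := q) (fun j _ => (hq.1 j).le) (Finset.mem_univ i)
  rw [mass_eq hN hq] at h
  exact h

lemma GN_bound {G : ℝ → ℝ} {N : ℕ} {CG : ℝ} (hN : 1 ≤ N)
    (hCG : ∀ x ∈ Icc (0:ℝ) 1, ‖G x‖ ≤ CG) (i : Fin N) : |GN G N i| ≤ CG := by
  have hN0 : (0:ℝ) < N := by exact_mod_cast Nat.lt_of_lt_of_le Nat.zero_lt_one hN
  have hi0 : (0:ℝ) ≤ (i : ℝ) := by positivity
  have hi1 : (i : ℝ) + 1 ≤ (N : ℝ) := by exact_mod_cast i.isLt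
  have hle : (i : ℝ) / N ≤ ((i : ℝ) + 1) / N := by gcongr; linarith
  have hint : ∀ x ∈ Set.uIoc ((i : ℝ)/N) (((i : ℝ)+1)/N), ‖G x‖ ≤ CG := by
    intro x hx
    rw [Set.uIoc_of_le hle] at hx
    refine hCG x ⟨le_of_lt (lt_of_le_of_lt (by positivity) hx.1), le_trans hx.2 ?_⟩
    rw [div_le_one hN0]
    exact hi1
  have hnorm := intervalIntegral.norm_integral_le_of_norm_le_const hint
  have habs : |((i : ℝ) + 1)/N - (i : ℝ)/N| = 1/N := by
    rw [div_sub_div_same, add_sub_cancel_left, abs_of_pos (by positivity)]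
  rw [habs, Real.norm_eq_abs] at hnorm
  have hCG0 : 0 ≤ CG := le_trans (norm_nonneg _) (hCG 0 ⟨le_rfl, zero_le_one⟩)
  unfold GN
  rw [abs_mul, abs_of_pos hN0]
  calc (N:ℝ) * |∫ x in ((i : ℝ) / N)..(((i : ℝ) + 1) / N), G x|
      ≤ (N:ℝ) * (CG * (1/N)) := by gcongr
    _ = CG := by field_simp

lemma contDiffOn_of_deriv {f f' : ℝ → ℝ}
    (hd : ∀ x > (0:ℝ), HasDerivAt f (f' x) x) (hc : ContinuousOn f' (Ioi 0)) :
    ContDiffOn ℝ 1 f (Ioi 0) := by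
  have hdiff : DifferentiableOn ℝ f (Ioi 0) :=
    fun x hx => (hd x hx).differentiableAt.differentiableWithinAt
  have hc0 : ContDiffOn ℝ 0 (deriv f) (Ioi 0) :=
    contDiffOn_zero.mpr (hc.congr fun x hx => (hd x hx).deriv)
  have h := (contDiffOn_succ_iff_deriv_of_isOpen (n := 0) isOpen_Ioi).mpr
    ⟨hdiff, by simp, hc0⟩
  simpa using h

lemma contDiffOn_VN {k W' G : ℝ → ℝ} {N : ℕ} (hN : 1 ≤ N)
    (hk_pos : ∀ x > (0:ℝ), 0 < k x)
    (hk1 : ContDiffOn ℝ 1 k (Ioi 0)) (hW'1 : ContDiffOn ℝ 1 W' (Ioi 0)) :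
    ContDiffOn ℝ 1 (VN k W' G N) {q : Fin N → ℝ | ∀ i, 0 < q i} := by
  haveI : Nonempty (Fin N) := ⟨⟨0, hN⟩⟩
  set U := {q : Fin N → ℝ | ∀ i, 0 < q i} with hU
  have hproj : ∀ i : Fin N, ContDiffOn ℝ 1 (fun q : Fin N → ℝ => q i) U := fun i =>
    (ContinuousLinearMap.proj (R := ℝ) (φ := fun _ : Fin N => ℝ) i).contDiff.contDiffOn
  have hmaps : ∀ i : Fin N, MapsTo (fun q : Fin N → ℝ => q i) U (Ioi 0) := fun i q hq => hq i
  have hki : ∀ i, ContDiffOn ℝ 1 (fun q : Fin N → ℝ => k (q i)) U :=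
    fun i => hk1.comp (hproj i) (hmaps i)
  have hW'i : ∀ i, ContDiffOn ℝ 1 (fun q : Fin N → ℝ => W' (q i)) U :=
    fun i => hW'1.comp (hproj i) (hmaps i)
  have hS2 : ContDiffOn ℝ 1 (fun q : Fin N → ℝ => ∑ j, k (q j)) U :=
    ContDiffOn.sum fun j _ => hki j
  have hS1 : ContDiffOn ℝ 1 (fun q : Fin N → ℝ => ∑ j, k (q j) * (W' (q j) - GN G N j)) U :=
    ContDiffOn.sum fun j _ => (hki j).mul ((hW'i j).sub contDiffOn_const)
  have hS2ne : ∀ q ∈ U, (∑ j, k (q j)) ≠ 0 := fun q hq =>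
    (Finset.sum_pos (fun j _ => hk_pos _ (hq j)) Finset.univ_nonempty).ne'
  have hlam : ContDiffOn ℝ 1 (lamN k W' G N) U := hS1.div hS2 hS2ne
  rw [contDiffOn_pi]
  intro i
  exact ((hki i).neg).mul (((hW'i i).sub contDiffOn_const).sub hlam)

lemma energy_hasDeriv {k W' G W : ℝ → ℝ} {N : ℕ}
    (hW' : ∀ x > (0:ℝ), HasDerivAt W (W' x) x)
    {q : ℝ → Fin N → ℝ} {S : Set ℝ} {t : ℝ}
    (hq : HasDerivWithinAt q (VN k W' G N (q t)) S t) (hpos : ∀ i, 0 < q t i) :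
    HasDerivWithinAt (fun s => energyN W G N (q s))
      ((1/(N:ℝ)) * ∑ i, (W' (q t i) - GN G N i) * VN k W' G N (q t) i) S t := by
  have hcoord : ∀ i, HasDerivWithinAt (fun s => q s i) (VN k W' G N (q t) i) S t :=
    fun i => hasDerivWithinAt_pi.mp hq i
  have hterm : ∀ i ∈ Finset.univ, HasDerivWithinAt (fun s => W (q s i) - GN G N i * (q s i))
      ((W' (q t i) - GN G N i) * VN k W' G N (q t) i) S t := by
    intro i _
    have h1 : HasDerivWithinAt (fun s => W (q s i)) (W' (q t i) * VN k W' G N (q t) i) S t := by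
      have := (hW' (q t i) (hpos i)).comp_hasDerivWithinAt t (hcoord i)
      exact this
    have h2 : HasDerivWithinAt (fun s => GN G N i * q s i)
        (GN G N i * VN k W' G N (q t) i) S t := (hcoord i).const_mul _
    have h3 := h1.sub h2
    rw [sub_mul]
    exact h3
  have hsum := (HasDerivWithinAt.fun_sum hterm).const_mul (1/(N:ℝ))
  exact hsum

lemma energy_anti {k W' G W : ℝ → ℝ} {N : ℕ} (hN : 1 ≤ N)
    (hk_pos : ∀ x > (0:ℝ), 0 < k x)
    (hW' : ∀ x > (0:ℝ), HasDerivAt W (W' x) x)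
    {q : ℝ → Fin N → ℝ} {D : Set ℝ} (hD : Convex ℝ D)
    (hpos : ∀ t ∈ D, ∀ i, 0 < q t i)
    (hode : ∀ t ∈ D, HasDerivWithinAt q (VN k W' G N (q t)) D t) :
    AntitoneOn (fun t => energyN W G N (q t)) D := by
  have hchain : ∀ t ∈ D, HasDerivWithinAt (fun s => energyN W G N (q s))
      ((1/(N:ℝ)) * ∑ i, (W' (q t i) - GN G N i) * VN k W' G N (q t) i) D t :=
    fun t ht => energy_hasDeriv hW' (hode t ht) (hpos t ht)
  apply antitoneOn_of_deriv_nonpos hD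
  · exact fun t ht => (hchain t ht).continuousWithinAt
  · intro t ht
    exact ((hchain t (interior_subset ht)).hasDerivAt
      (mem_interior_iff_mem_nhds.mp ht)).differentiableAt.differentiableWithinAt
  · intro t ht
    have hda := (hchain t (interior_subset ht)).hasDerivAt (mem_interior_iff_mem_nhds.mp ht)
    rw [hda.deriv, diss_sum hN hk_pos (hpos t (interior_subset ht))]
    have hnn : 0 ≤ ∑ i, k (q t i) * (W' (q t i) - GN G N i - lamN k W' G N (q t))^2 :=
      Finset.sum_nonneg fun i _ =>
        mul_nonneg (hk_pos _ (hpos t (interior_subset ht) i)).le (sq_nonneg _)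
    have h1N : (0:ℝ) ≤ 1/(N:ℝ) := by positivity
    rw [mul_neg, neg_nonpos]
    exact mul_nonneg h1N hnn
/-- Global existence and uniqueness for the discrete gradient flow;
the energy is nonincreasing along the solution. -/
theorem discrete_global_existence_uniqueness
    (k k' : ℝ → ℝ) (κl κu : ℝ)
    (hκl : 0 < κl) (hκlu : κl ≤ κu)
    (hk_cont : ContinuousOn k (Set.Ici 0))
    (hk_deriv : ∀ x > (0:ℝ), HasDerivAt k (k' x) x)
    (hk'_cont : ContinuousOn k' (Set.Ioi 0))
    (hk_bnd : ∀ x ≥ (0:ℝ), κl * x ≤ k x ∧ k x ≤ κu * x)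
    (W W' W'' : ℝ → ℝ)
    (hW' : ∀ x > (0:ℝ), HasDerivAt W (W' x) x)
    (hW'' : ∀ x > (0:ℝ), HasDerivAt W' (W'' x) x)
    (hW''c : ContinuousOn W'' (Set.Ioi 0))
    (hW0 : Filter.Tendsto W (nhdsWithin 0 (Set.Ioi 0)) Filter.atTop)
    (hWtop : Filter.Tendsto W Filter.atTop Filter.atTop)
    (G : ℝ → ℝ) (hG : ContinuousOn G (Set.Icc 0 1))
    (N : ℕ) (hN : 1 ≤ N) (p0 : Fin N → ℝ) (hp0 : memPN N p0) :
    ∃ p : ℝ → Fin N → ℝ,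
      (p 0 = p0 ∧ (∀ t ∈ Set.Ici (0:ℝ), memPN N (p t)) ∧ solvesODE k W' G N p ∧
        AntitoneOn (fun t => energyN W G N (p t)) (Set.Ici 0)) ∧
      ∀ q : ℝ → Fin N → ℝ,
        (q 0 = p0 ∧ (∀ t ∈ Set.Ici (0:ℝ), memPN N (q t)) ∧ solvesODE k W' G N q) →
        Set.EqOn q p (Set.Ici 0) := by
  classical
  haveI : Nonempty (Fin N) := ⟨⟨0, hN⟩⟩
  have hN0 : (0:ℝ) < N := by exact_mod_cast Nat.lt_of_lt_of_le Nat.zero_lt_one hN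
  have hN1 : (1:ℝ) ≤ N := by exact_mod_cast hN
  have hk_pos : ∀ x > (0:ℝ), 0 < k x :=
    fun x hx => lt_of_lt_of_le (mul_pos hκl hx) (hk_bnd x hx.le).1
  -- C¹ regularity
  have hk1 : ContDiffOn ℝ 1 k (Ioi 0) := contDiffOn_of_deriv hk_deriv hk'_cont
  have hW'1 : ContDiffOn ℝ 1 W' (Ioi 0) := contDiffOn_of_deriv hW'' hW''c
  -- bound on G
  obtain ⟨CG, hCG⟩ := isCompact_Icc.exists_bound_of_continuousOn hG
  have hCG0 : (0:ℝ) ≤ CG := le_trans (norm_nonneg _) (hCG 0 ⟨le_rfl, zero_le_one⟩)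
  have hGN : ∀ i : Fin N, |GN G N i| ≤ CG := GN_bound hN hCG
  -- lower bound for W on (0, N+1]
  have hmW : ∃ mW : ℝ, ∀ x : ℝ, 0 < x → x ≤ (N:ℝ)+1 → mW ≤ W x := by
    have h := hW0.eventually (eventually_ge_atTop (0:ℝ))
    rw [eventually_nhdsWithin_iff] at h
    obtain ⟨ε, hε, hball⟩ := Metric.eventually_nhds_iff.mp h
    set a := min (ε/2) ((N:ℝ)+1) with ha
    have ha0 : 0 < a := lt_min (by linarith) (by linarith)
    have hWc : ContinuousOn W (Icc a ((N:ℝ)+1)) := fun x hx =>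
      ((hW' x (lt_of_lt_of_le ha0 hx.1)).continuousAt).continuousWithinAt
    obtain ⟨M, hM⟩ := isCompact_Icc.exists_bound_of_continuousOn hWc
    refine ⟨min 0 (-M), fun x hx hxN => ?_⟩
    rcases lt_or_ge x a with hlt | hge
    · have : (0:ℝ) ≤ W x := by
        refine hball ?_ hx
        rw [Real.dist_eq, sub_zero, abs_of_pos hx]
        exact lt_of_lt_of_le hlt (le_trans (min_le_left _ _) (by linarith))
      exact le_trans (min_le_left _ _) this
    · have := hM x ⟨hge, hxN⟩
      rw [Real.norm_eq_abs] at this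
      have := abs_le.mp this
      exact le_trans (min_le_right _ _) (by linarith [this.1])
  obtain ⟨mW, hmW⟩ := hmW
  set E0 := energyN W G N p0 with hE0def
  set B := (N:ℝ)*E0 + CG*(N:ℝ) - ((N:ℝ)-1)*mW with hBdef
  -- pointwise a priori bound on W values
  have claimW : ∀ q : Fin N → ℝ, memPN N q → energyN W G N q ≤ E0 → ∀ i, W (q i) ≤ B := by
    intro q hq hE i
    have hmassq : ∑ j, q j = (N:ℝ) := mass_eq hN hq
    have hsumW : ∑ j, W (q j) ≤ (N:ℝ)*E0 + CG*(N:ℝ) := by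
      have h1 : ∑ j, (W (q j) - GN G N j * q j) ≤ (N:ℝ) * E0 := by
        have he : ∑ j, (W (q j) - GN G N j * q j) = (N:ℝ) * energyN W G N q := by
          unfold energyN
          field_simp
        rw [he]
        exact mul_le_mul_of_nonneg_left hE hN0.le
      have h2 : ∑ j, GN G N j * q j ≤ CG * (N:ℝ) := by
        calc ∑ j, GN G N j * q j ≤ ∑ j, CG * q j :=
              Finset.sum_le_sum (fun j _ => mul_le_mul_of_nonneg_right
                (le_trans (le_abs_self _) (hGN j)) (hq.1 j).le)
          _ = CG * (N:ℝ) := by rw [← Finset.mul_sum, hmassq]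
      have h3 : ∑ j, W (q j)
          = (∑ j, (W (q j) - GN G N j * q j)) + ∑ j, GN G N j * q j := by
        rw [← Finset.sum_add_distrib]
        exact Finset.sum_congr rfl fun j _ => by ring
      linarith
    have herase : ((N:ℝ) - 1) * mW ≤ ∑ j ∈ Finset.univ.erase i, W (q j) := by
      have hcard : (Finset.univ.erase i).card = N - 1 := by
        rw [Finset.card_erase_of_mem (Finset.mem_univ i), Finset.card_univ, Fintype.card_fin]
      have hb : ∀ j ∈ Finset.univ.erase i, mW ≤ W (q j) :=
        fun j _ => hmW _ (hq.1 j) (le_trans (coords_le hN hq j) (by linarith))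
      have hle := Finset.card_nsmul_le_sum (Finset.univ.erase i) (fun j => W (q j)) mW hb
      rw [hcard, nsmul_eq_mul] at hle
      have hcast : ((N - 1 : ℕ):ℝ) = (N:ℝ) - 1 := by
        rw [Nat.cast_sub hN]
        simp
      rwa [hcast] at hle
    have hsplit : (∑ j ∈ Finset.univ.erase i, W (q j)) + W (q i) = ∑ j, W (q j) :=
      Finset.sum_erase_add _ _ (Finset.mem_univ i)
    rw [hBdef]
    linarith
  -- δ; lower bound for coordinates
  have hδ : ∃ δ : ℝ, 0 < δ ∧ δ ≤ 1 ∧ ∀ x : ℝ, 0 < x → W x ≤ B → δ ≤ x := by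
    have h := hW0.eventually (eventually_gt_atTop B)
    rw [eventually_nhdsWithin_iff] at h
    obtain ⟨ε, hε, hball⟩ := Metric.eventually_nhds_iff.mp h
    refine ⟨min (ε/2) 1, lt_min (by linarith) one_pos, min_le_right _ _, fun x hx hWx => ?_⟩
    by_contra hcon
    push_neg at hcon
    have : B < W x := by
      refine hball ?_ hx
      rw [Real.dist_eq, sub_zero, abs_of_pos hx]
      exact lt_of_lt_of_le (lt_of_lt_of_le hcon (min_le_left _ _)) (by linarith)
    linarith
  obtain ⟨δ, hδ0, hδ1, hδ⟩ := hδ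
  have coord_lower : ∀ q : Fin N → ℝ, memPN N q → energyN W G N q ≤ E0 → ∀ i, δ ≤ q i :=
    fun q h1 h2 i => hδ _ (h1.1 i) (claimW q h1 h2 i)
  -- the open positive orthant and the compact box
  set U := {q : Fin N → ℝ | ∀ i, 0 < q i} with hUdef
  have hUopen : IsOpen U := by
    have : U = Set.pi univ (fun _ : Fin N => Ioi (0:ℝ)) := by
      ext q; simp [hUdef, Set.mem_pi]
    rw [this]
    exact isOpen_set_pi finite_univ (fun i _ => isOpen_Ioi)
  have hVC1 : ContDiffOn ℝ 1 (VN k W' G N) U := contDiffOn_VN hN hk_pos hk1 hW'1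
  set K := Set.pi (univ : Set (Fin N)) (fun _ => Icc (δ/2) ((N:ℝ)+1)) with hKdef
  have hKU : K ⊆ U := fun q hq i => lt_of_lt_of_le (by linarith) (hq i (mem_univ i)).1
  have hKcomp : IsCompact K := isCompact_univ_pi (fun _ => isCompact_Icc)
  have hKconv : Convex ℝ K := convex_pi (fun i _ => convex_Icc _ _)
  have hKne : K.Nonempty := ⟨fun _ => δ/2, fun i _ => ⟨le_rfl, by linarith⟩⟩
  -- V is Lipschitz on K
  have hVlipE : ∃ LV : NNReal, LipschitzOnWith LV (VN k W' G N) K := by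
    have hdiffAt : ∀ x ∈ K, DifferentiableAt ℝ (VN k W' G N) x := fun x hx =>
      (hVC1.differentiableOn one_ne_zero).differentiableAt (hUopen.mem_nhds (hKU hx))
    have hfc : ContinuousOn (fderiv ℝ (VN k W' G N)) U :=
      hVC1.continuousOn_fderiv_of_isOpen hUopen le_rfl
    obtain ⟨M, hM⟩ := hKcomp.exists_bound_of_continuousOn (hfc.mono hKU)
    have hM0 : 0 ≤ M := le_trans (norm_nonneg _) (hM _ hKne.some_mem)
    refine ⟨Real.toNNReal M, hKconv.lipschitzOnWith_of_nnnorm_fderiv_le hdiffAt fun x hx => ?_⟩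
    rw [← NNReal.coe_le_coe, coe_nnnorm, Real.coe_toNNReal M hM0]
    exact hM x hx
  obtain ⟨LV, hVlip⟩ := hVlipE
  -- V is bounded on K
  obtain ⟨CV, hCV⟩ := hKcomp.exists_bound_of_continuousOn (hVC1.continuousOn.mono hKU)
  have hCV0 : 0 ≤ CV := le_trans (norm_nonneg _) (hCV _ hKne.some_mem)
  -- clamping map
  set Φ : (Fin N → ℝ) → (Fin N → ℝ) := fun q i => max (min (q i) ((N:ℝ)+1)) (δ/2) with hΦdef
  have hΦmem : ∀ q, Φ q ∈ K := by
    intro q i _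
    refine ⟨le_max_right _ _, max_le (le_trans (min_le_right _ _) le_rfl) (by linarith)⟩
  have hΦpos : ∀ q i, 0 < Φ q i := fun q i => lt_of_lt_of_le (by linarith) (le_max_right _ _)
  have hΦid : ∀ q : Fin N → ℝ, (∀ i, δ/2 ≤ q i ∧ q i ≤ (N:ℝ)+1) → Φ q = q := by
    intro q hq
    funext i
    rw [hΦdef]
    simp only
    rw [min_eq_left (hq i).2, max_eq_left (hq i).1]
  have hΦlip : LipschitzWith 1 Φ := by
    apply LipschitzWith.of_dist_le_mul
    intro a b
    simp only [NNReal.coe_one, one_mul]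
    rw [dist_pi_le_iff dist_nonneg]
    intro i
    calc dist (Φ a i) (Φ b i) ≤ dist (a i) (b i) := by
          rw [Real.dist_eq, Real.dist_eq]
          refine le_trans (abs_max_sub_max_le_abs _ _ _) ?_
          refine le_trans (abs_min_sub_min_le_max _ _ _ _) ?_
          rw [sub_self, abs_zero]
          exact max_le le_rfl (abs_nonneg _)
      _ ≤ dist a b := dist_le_pi_dist a b i
  -- the cut-off vector field
  set F : (Fin N → ℝ) → (Fin N → ℝ) := fun q => VN k W' G N (Φ q) with hFdef
  have hFlip : LipschitzWith (LV * 1) F := by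
    rw [← lipschitzOnWith_univ]
    exact hVlip.comp (lipschitzOnWith_univ.mpr hΦlip) (fun q _ => hΦmem q)
  have hFbnd : ∀ q, ‖F q‖ ≤ CV := fun q => hCV _ (hΦmem q)
  -- global solution of the cut-off ODE
  have key : ∀ n : ℕ, ∃ f : ℝ → (Fin N → ℝ), f 0 = p0 ∧
      ∀ t ∈ Icc (0:ℝ) ((n:ℝ)+1), HasDerivWithinAt f (F (f t)) (Icc (0:ℝ) ((n:ℝ)+1)) t := by
    intro n
    have hpl : IsPicardLindelof (fun _ x => F x) (tmin := 0) (tmax := (n:ℝ)+1)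
        ⟨0, le_rfl, by positivity⟩ p0 (Real.toNNReal (CV * ((n:ℝ)+1))) 0 (Real.toNNReal CV)
        (LV * 1) :=
      { lipschitzOnWith := fun t _ => hFlip.lipschitzOnWith
        continuousOn := fun x _ => continuousOn_const
        norm_le := fun t _ x _ => by rw [Real.coe_toNNReal _ hCV0]; exact hFbnd x
        mul_max_le := by
          rw [Real.coe_toNNReal _ hCV0, Real.coe_toNNReal _ (by positivity)]
          simp only [sub_zero, NNReal.coe_zero, sub_self]
          rw [max_eq_left (by positivity)] }
    exact hpl.exists_eq_forall_mem_Icc_hasDerivWithinAt₀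
  choose g hg0 hgderiv using key
  have hgcont : ∀ n : ℕ, ContinuousOn (g n) (Icc (0:ℝ) ((n:ℝ)+1)) :=
    fun n t ht => (hgderiv n t ht).continuousWithinAt
  have d1 : ∀ (n : ℕ) (t : ℝ), t ∈ Ico (0:ℝ) ((n:ℝ)+1) →
      HasDerivWithinAt (g n) (F (g n t)) (Ici t) t :=
    fun n t ht => (hgderiv n t (Ico_subset_Icc_self ht)).mono_of_mem_nhdsWithin
      (Icc_mem_nhdsGE_of_mem ht)
  have uniqF : ∀ (b : ℝ) (f₁ f₂ : ℝ → Fin N → ℝ), ContinuousOn f₁ (Icc 0 b) →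
      (∀ t ∈ Ico (0:ℝ) b, HasDerivWithinAt f₁ (F (f₁ t)) (Ici t) t) →
      ContinuousOn f₂ (Icc 0 b) →
      (∀ t ∈ Ico (0:ℝ) b, HasDerivWithinAt f₂ (F (f₂ t)) (Ici t) t) →
      f₁ 0 = f₂ 0 → EqOn f₁ f₂ (Icc 0 b) := by
    intro b f₁ f₂ h1 h2 h3 h4 h5
    exact ODE_solution_unique_of_mem_Icc_right (v := fun _ x => F x) (s := fun _ => univ) (K := LV * 1)
      (fun _ _ => hFlip.lipschitzOnWith) h1 h2 (fun _ _ => mem_univ _)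
      h3 h4 (fun _ _ => mem_univ _) h5
  have gagree : ∀ (m n : ℕ) (s : ℝ), s ∈ Icc (0:ℝ) ((m:ℝ)+1) → s ∈ Icc (0:ℝ) ((n:ℝ)+1) →
      g m s = g n s := by
    have consist : ∀ m n : ℕ, m ≤ n → EqOn (g m) (g n) (Icc (0:ℝ) ((m:ℝ)+1)) := by
      intro m n hmn
      have hmn' : ((m:ℝ)+1) ≤ ((n:ℝ)+1) := by exact_mod_cast by linarith [(Nat.cast_le (α := ℝ)).mpr hmn]
      refine uniqF ((m:ℝ)+1) (g m) (g n) (hgcont m) (d1 m)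
        ((hgcont n).mono (Icc_subset_Icc_right hmn')) (fun t ht => d1 n t ⟨ht.1, lt_of_lt_of_le ht.2 hmn'⟩)
        (by rw [hg0 m, hg0 n])
    intro m n s hm hn
    rcases le_total m n with h | h
    · exact consist m n h hm
    · exact (consist n m h hn).symm
  set p : ℝ → Fin N → ℝ := fun t => g ⌊t⌋₊ t with hpdef
  have hfloor : ∀ t : ℝ, 0 ≤ t → t ∈ Icc (0:ℝ) ((⌊t⌋₊:ℝ)+1) :=
    fun t ht => ⟨ht, (Nat.lt_floor_add_one t).le⟩
  have hpagree : ∀ n : ℕ, EqOn p (g n) (Icc (0:ℝ) ((n:ℝ)+1)) :=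
    fun n s hs => gagree ⌊s⌋₊ n s (hfloor s hs.1) hs
  have hp00 : p 0 = p0 := by
    rw [hpdef]
    simp only [Nat.floor_zero]
    exact hg0 0
  have hpF : ∀ t ∈ Ici (0:ℝ), HasDerivWithinAt p (F (p t)) (Ici 0) t := by
    intro t ht
    set n := ⌊t⌋₊ with hn
    have htn : t < (n:ℝ)+1 := Nat.lt_floor_add_one t
    have hmem : Icc (0:ℝ) ((n:ℝ)+1) ∈ 𝓝[Ici 0] t := by
      refine mem_nhdsWithin.mpr ⟨Iio ((n:ℝ)+1), isOpen_Iio, htn, ?_⟩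
      rintro u ⟨hu1, hu2⟩
      exact ⟨hu2, le_of_lt hu1⟩
    have hd := (hgderiv n t ⟨ht, htn.le⟩).mono_of_mem_nhdsWithin hmem
    have heq : p t = g n t := hpagree n ⟨ht, htn.le⟩
    have hcong := hd.congr_of_eventuallyEq
      (by filter_upwards [hmem] with s hs; exact hpagree n hs) heq
    rwa [show F (g n t) = F (p t) by rw [heq]] at hcong
  have hpcont : ContinuousOn p (Ici 0) := fun t ht => (hpF t ht).continuousWithinAt
  -- mass conservation
  have hmassF : ∀ t ∈ Ici (0:ℝ), HasDerivWithinAt (fun s => ∑ i, p s i) 0 (Ici 0) t := by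
    intro t ht
    have h := hasDerivWithinAt_pi.mp (hpF t ht)
    have hs := HasDerivWithinAt.fun_sum (u := Finset.univ) (fun i _ => h i)
    have hzero : (∑ i, F (p t) i) = 0 := by
      rw [hFdef]
      exact sum_VN_eq_zero hN hk_pos (hΦpos (p t))
    rwa [hzero] at hs
  have hmass : ∀ t ∈ Ici (0:ℝ), ∑ i, p t i = (N:ℝ) := by
    intro t ht
    have hconst := constant_of_has_deriv_right_zero (f := fun s => ∑ i, p s i) (a := 0) (b := t)
      (fun x hx => ((hmassF x hx.1).continuousWithinAt).mono Icc_subset_Ici_self)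
      (fun x hx => (hmassF x hx.1).mono (Ici_subset_Ici.mpr hx.1))
    have h0 : (∑ i, p 0 i) = (N:ℝ) := by
      rw [hp00]
      exact mass_eq hN hp0
    rw [← h0]
    exact hconst t ⟨ht, le_rfl⟩
  -- invariance of the good region
  set C : Set (Fin N → ℝ) :=
    {q : Fin N → ℝ | ∀ i, δ ≤ q i} ∩ (energyN W G N) ⁻¹' (Iic E0) with hCdef
  have hgood : ∀ t ∈ Ici (0:ℝ), p t ∈ C := by
    have hCclosed : IsClosed C := by
      have hDclosed : IsClosed {q : Fin N → ℝ | ∀ i, δ ≤ q i} := by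
        have hset : {q : Fin N → ℝ | ∀ i, δ ≤ q i}
            = Set.pi univ (fun _ : Fin N => Ici δ) := by
          ext q
          simp only [Set.mem_setOf_eq, Set.mem_pi, Set.mem_univ, Set.mem_Ici,
            forall_true_left]
        rw [hset]
        exact isClosed_set_pi (fun i _ => isClosed_Ici)
      have hWc : ContinuousOn W (Ici δ) := fun x hx =>
        ((hW' x (lt_of_lt_of_le hδ0 hx)).continuousAt).continuousWithinAt
      have hencont : ContinuousOn (energyN W G N) {q : Fin N → ℝ | ∀ i, δ ≤ q i} := by
        apply ContinuousOn.mul continuousOn_const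
        apply continuousOn_finset_sum
        intro i _
        refine ContinuousOn.sub (hWc.comp (continuous_apply i).continuousOn ?_)
          (continuousOn_const.mul (continuous_apply i).continuousOn)
        intro q hq
        exact hq i
      rw [hCdef]
      exact hencont.preimage_isClosed_of_isClosed hDclosed isClosed_Iic
    intro T hT
    have hsub : Icc (0:ℝ) T ⊆ p ⁻¹' C := by
      apply IsClosed.Icc_subset_of_forall_exists_gt
      · have hcl := (hpcont.mono (Icc_subset_Ici_self : Icc (0:ℝ) T ⊆ Ici 0)
          ).preimage_isClosed_of_isClosed isClosed_Icc hCclosed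
        rwa [inter_comm] at hcl
      · have hmem0 : memPN N (p 0) := by rw [hp00]; exact hp0
        have hE0' : energyN W G N (p 0) ≤ E0 := by rw [hp00]
        exact ⟨fun i => coord_lower (p 0) hmem0 hE0' i, hE0'⟩
      · rintro x ⟨hxC, hx0, hxT⟩ y hy
        set O := Set.pi (univ : Set (Fin N)) (fun _ => Ioo (δ/2) ((N:ℝ)+1)) with hOdef
        have hOopen : IsOpen O := isOpen_set_pi finite_univ (fun i _ => isOpen_Ioo)
        have hmemx : memPN N (p x) := ⟨fun i => lt_of_lt_of_le hδ0 (hxC.1 i),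
          by rw [hmass x hx0]; field_simp⟩
        have hpxO : p x ∈ O := by
          intro i _
          exact ⟨by linarith [hxC.1 i], lt_of_le_of_lt (coords_le hN hmemx i) (by linarith)⟩
        have hnhd : p ⁻¹' O ∈ 𝓝[Ici 0] x :=
          (hpcont x hx0).preimage_mem_nhdsWithin (hOopen.mem_nhds hpxO)
        obtain ⟨r, hr, hball⟩ := Metric.mem_nhdsWithin_iff.mp hnhd
        set b := min (x + r/2) y with hbdef
        have hxb : x < b := lt_min (by linarith) hy
        have hJO : ∀ u ∈ Icc x b, p u ∈ O := by
          intro u hu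
          apply hball
          refine ⟨?_, le_trans hx0 hu.1⟩
          rw [Metric.mem_ball, Real.dist_eq, abs_of_nonneg (by linarith [hu.1])]
          have hub : u ≤ x + r/2 := le_trans hu.2 (min_le_left _ _)
          linarith
        have hJpos : ∀ u ∈ Icc x b, ∀ i, 0 < p u i := fun u hu i =>
          lt_trans (by linarith) ((hJO u hu) i (mem_univ i)).1
        have hJIci : Icc x b ⊆ Ici (0:ℝ) := fun u hu => le_trans hx0 hu.1
        have hJode : ∀ u ∈ Icc x b, HasDerivWithinAt p (VN k W' G N (p u)) (Icc x b) u := by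
          intro u hu
          have hid : Φ (p u) = p u := hΦid (p u) (fun i =>
            ⟨((hJO u hu) i (mem_univ i)).1.le, ((hJO u hu) i (mem_univ i)).2.le⟩)
          have h := (hpF u (hJIci hu)).mono hJIci
          simp only [hFdef] at h
          rwa [hid] at h
        have hJanti : AntitoneOn (fun t => energyN W G N (p t)) (Icc x b) :=
          energy_anti hN hk_pos hW' (convex_Icc x b) hJpos hJode
        have hJgood : ∀ u ∈ Icc x b, p u ∈ C := by
          intro u hu
          have hEu : energyN W G N (p u) ≤ E0 :=
            le_trans (hJanti ⟨le_rfl, hxb.le⟩ hu hu.1) hxC.2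
          have hmemu : memPN N (p u) :=
            ⟨hJpos u hu, by rw [hmass u (hJIci hu)]; field_simp⟩
          exact ⟨fun i => coord_lower (p u) hmemu hEu i, hEu⟩
        exact ⟨b, hJgood b ⟨hxb.le, le_rfl⟩, hxb, min_le_right _ _⟩
    exact hsub ⟨hT, le_rfl⟩
  have hmem : ∀ t ∈ Ici (0:ℝ), memPN N (p t) := by
    intro t ht
    refine ⟨fun i => lt_of_lt_of_le hδ0 ((hgood t ht).1 i), ?_⟩
    rw [hmass t ht]
    field_simp
  have hsolv : solvesODE k W' G N p := by
    intro t ht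
    have hid : Φ (p t) = p t := hΦid (p t)
      (fun i => ⟨le_trans (by linarith) ((hgood t ht).1 i),
        le_trans (coords_le hN (hmem t ht) i) (by linarith)⟩)
    have h := hpF t ht
    simp only [hFdef] at h
    rwa [hid] at h
  have hanti : AntitoneOn (fun t => energyN W G N (p t)) (Ici 0) :=
    energy_anti hN hk_pos hW' (convex_Ici 0) (fun t ht i => (hmem t ht).1 i) hsolv
  refine ⟨p, ⟨hp00, hmem, hsolv, hanti⟩, ?_⟩
  -- uniqueness
  intro q ⟨hq0, hqmem, hqode⟩
  have hqanti : AntitoneOn (fun t => energyN W G N (q t)) (Ici 0) :=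
    energy_anti hN hk_pos hW' (convex_Ici 0) (fun t ht i => (hqmem t ht).1 i) hqode
  have hqE : ∀ t ∈ Ici (0:ℝ), energyN W G N (q t) ≤ E0 := by
    intro t ht
    have h := hqanti self_mem_Ici ht ht
    simp only at h
    rw [hq0] at h
    exact h
  have hqδ : ∀ t ∈ Ici (0:ℝ), ∀ i, δ ≤ q t i := fun t ht =>
    coord_lower (q t) (hqmem t ht) (hqE t ht)
  have hqK : ∀ t ∈ Ici (0:ℝ), q t ∈ K := by
    intro t ht i _
    exact ⟨le_trans (by linarith) (hqδ t ht i),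
      le_trans (coords_le hN (hqmem t ht) i) (by linarith)⟩
  have hpK : ∀ t ∈ Ici (0:ℝ), p t ∈ K := by
    intro t ht i _
    exact ⟨le_trans (by linarith) ((hgood t ht).1 i),
      le_trans (coords_le hN (hmem t ht) i) (by linarith)⟩
  intro t ht
  rcases eq_or_lt_of_le (mem_Ici.mp ht) with h0 | h0
  · rw [← h0, hq0, hp00]
  · have huniq : EqOn q p (Icc 0 t) :=
      ODE_solution_unique_of_mem_Icc_right (v := fun _ x => VN k W' G N x)
        (s := fun _ => K) (K := LV) (fun _ _ => hVlip)
        (fun u hu => ((hqode u hu.1).continuousWithinAt).mono Icc_subset_Ici_self)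
        (fun u hu => (hqode u hu.1).mono (Ici_subset_Ici.mpr hu.1))
        (fun u hu => hqK u hu.1)
        (fun u hu => ((hsolv u hu.1).continuousWithinAt).mono Icc_subset_Ici_self)
        (fun u hu => (hsolv u hu.1).mono (Ici_subset_Ici.mpr hu.1))
        (fun u hu => hpK u hu.1)
        (by rw [hq0, hp00])
    exact huniq ⟨mem_Ici.mp ht, le_rfl⟩
end
end

section
/- Convergence of energies under projection (well-preparedness of initial conditions): Assume W = W₁ + W₂ with W₁ : (0,∞) → ℝ convex and W₂ : (0,∞) → ℝ continuous and bounded, that W is bounded from below, and that G ∈ C([0,1]). Then for every p ∈ 𝐏 with ε(p) < ∞ one has ε_N(P_N p) → ε(p) as N → ∞. -/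
open MeasureTheory Real Set Filter

noncomputable section

/-- The reference measure on `Ω = (0,1)`. -/
def μΩ : Measure ℝ := volume.restrict (Set.Ioo 0 1)

/-- Membership in `𝐏`: positive a.e. probability densities on `Ω = (0,1)`. -/
def memP (p : ℝ → ℝ) : Prop :=
  Measurable p ∧ (∀ᵐ x ∂μΩ, 0 < p x) ∧ Integrable p μΩ ∧ (∫ x in Set.Ioo (0:ℝ) 1, p x) = 1

/-- The energy `ε(p) = ∫_Ω (W(p) − G·p)`. -/
def energy (W G : ℝ → ℝ) (p : ℝ → ℝ) : ℝ :=
  ∫ x in Set.Ioo (0:ℝ) 1, (W (p x) - G x * p x)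

/-- The projection `P_N p` onto piecewise constant densities. -/
def PNproj (p : ℝ → ℝ) (N : ℕ) (i : Fin N) : ℝ :=
  (N : ℝ) * ∫ x in ((i : ℝ) / N)..(((i : ℝ) + 1) / N), p x
/-- averaging operator: value of the `N`-cell average of `f` at `x`. -/
def cavg (f : ℝ → ℝ) (N : ℕ) (x : ℝ) : ℝ :=
  (N : ℝ) * ∫ t in ((⌊(N:ℝ)*x⌋ : ℝ)/N)..((⌊(N:ℝ)*x⌋ + 1 : ℝ)/N), f t

lemma cavg_measurable (f : ℝ → ℝ) (N : ℕ) (h : ℝ → ℝ) :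
    Measurable (fun x => h (cavg f N x)) := by
  have : (fun x => h (cavg f N x)) =
      (fun k : ℤ => h ((N : ℝ) * ∫ t in ((k:ℝ)/N)..((k + 1 : ℝ)/N), f t)) ∘
        (fun x : ℝ => ⌊(N:ℝ)*x⌋) := rfl
  rw [this]
  exact measurable_from_top.comp (Int.measurable_floor.comp (measurable_const.mul measurable_id))

lemma floor_toNat_lt {N : ℕ} (hN : 1 ≤ N) {x : ℝ} (hx : x ∈ Ioo (0:ℝ) 1) :
    ⌊(N:ℝ)*x⌋.toNat < N ∧
      x ∈ Ico ((⌊(N:ℝ)*x⌋.toNat : ℝ)/N) ((⌊(N:ℝ)*x⌋.toNat + 1 : ℝ)/N) := by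
  have hN0 : (0:ℝ) < N := by exact_mod_cast hN
  have h0 : (0:ℝ) ≤ (N:ℝ)*x := by nlinarith [hx.1]
  have h1 : (N:ℝ)*x < N := by nlinarith [hx.2]
  have hnn : (0:ℤ) ≤ ⌊(N:ℝ)*x⌋ := Int.floor_nonneg.2 h0
  have ht : ((⌊(N:ℝ)*x⌋.toNat : ℕ) : ℝ) = ((⌊(N:ℝ)*x⌋ : ℤ) : ℝ) := by
    exact_mod_cast congrArg (fun z : ℤ => (z:ℝ)) (Int.toNat_of_nonneg hnn)
  have hlt : ⌊(N:ℝ)*x⌋ < (N:ℤ) := Int.floor_lt.2 (by exact_mod_cast h1)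
  refine ⟨?_, ?_, ?_⟩
  · omega
  · rw [div_le_iff₀ hN0, ht, mul_comm]
    exact Int.floor_le _
  · rw [lt_div_iff₀ hN0, ht, mul_comm x]
    exact Int.lt_floor_add_one _

lemma floor_eq_of_mem_cell {N : ℕ} (hN : 1 ≤ N) {i : ℕ} {x : ℝ}
    (hx : x ∈ Ico ((i:ℝ)/N) (((i:ℝ)+1)/N)) : ⌊(N:ℝ)*x⌋ = (i:ℤ) := by
  have hN0 : (0:ℝ) < N := by exact_mod_cast hN
  rw [Int.floor_eq_iff]
  constructor
  · push_cast
    calc (i:ℝ) = N * ((i:ℝ)/N) := by field_simp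
    _ ≤ N * x := by nlinarith [hx.1]
  · push_cast
    calc (N:ℝ) * x < N * (((i:ℝ)+1)/N) := by nlinarith [hx.2]
    _ = (i:ℝ) + 1 := by field_simp

lemma cavg_eq_of_mem_cell {N : ℕ} (hN : 1 ≤ N) {i : ℕ} {x : ℝ}
    (hx : x ∈ Ico ((i:ℝ)/N) (((i:ℝ)+1)/N)) (f : ℝ → ℝ) :
    cavg f N x = (N : ℝ) * ∫ t in ((i:ℝ)/N)..(((i:ℝ)+1)/N), f t := by
  unfold cavg
  rw [floor_eq_of_mem_cell hN hx]
  norm_num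

lemma cell_length {N : ℕ} (hN : 1 ≤ N) (i : ℕ) :
    ((i:ℝ)+1)/N - (i:ℝ)/N = 1/N := by
  have hN0 : (0:ℝ) < N := by exact_mod_cast hN
  field_simp
  ring

/-- integral over a cell of a function that is constant on the `Ico`-cell. -/
lemma cell_integral_const {N : ℕ} (hN : 1 ≤ N) {φ : ℝ → ℝ} {i : ℕ} {ci : ℝ}
    (hφ : ∀ x ∈ Ico ((i:ℝ)/N) (((i:ℝ)+1)/N), φ x = ci) :
    φ =ᵐ[volume.restrict (Ioc ((i:ℝ)/N) (((i:ℝ)+1)/N))] (fun _ => ci) := by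
  have hsub : ∀ᵐ x ∂(volume.restrict (Ioc ((i:ℝ)/N) (((i:ℝ)+1)/N))),
      x ≠ ((i:ℝ)+1)/N := by
    refine ae_restrict_of_ae ?_
    refine ae_iff.2 ?_
    simpa using Real.volume_singleton (x := ((i:ℝ)+1)/N)
  filter_upwards [hsub, ae_restrict_mem measurableSet_Ioc] with x hne hx
  exact hφ x ⟨le_of_lt hx.1, lt_of_le_of_ne hx.2 hne⟩

lemma step_integral {N : ℕ} (hN : 1 ≤ N) {φ : ℝ → ℝ} {c : ℕ → ℝ}
    (hφ : ∀ i < N, ∀ x ∈ Ico ((i:ℝ)/N) (((i:ℝ)+1)/N), φ x = c i) :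
    ∫ x in Ioo (0:ℝ) 1, φ x = (1/(N:ℝ)) * ∑ i ∈ Finset.range N, c i := by
  have hN0 : (0:ℝ) < N := by exact_mod_cast hN
  have key : ∀ i < N, ∫ x in Ioc ((i:ℝ)/N) (((i:ℝ)+1)/N), φ x = c i * (1/N) := by
    intro i hi
    rw [integral_congr_ae (cell_integral_const hN (hφ i hi)), setIntegral_const]
    rw [measureReal_def, Real.volume_Ioc, cell_length hN i, smul_eq_mul,
      ENNReal.toReal_ofReal (by positivity), mul_comm]
  have hle : ∀ i : ℕ, (i:ℝ)/N ≤ ((i:ℝ)+1)/N := fun i =>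
    (div_le_div_iff_of_pos_right hN0).2 (by linarith)
  have hII : ∀ k < N, IntervalIntegrable φ volume ((k:ℝ)/N) (((k:ℝ)+1)/N) := by
    intro k hk
    rw [intervalIntegrable_iff_integrableOn_Ioc_of_le (hle k)]
    exact (integrableOn_const measure_Ioc_lt_top.ne).congr
      (cell_integral_const hN (hφ k hk)).symm
  have hsum := intervalIntegral.sum_integral_adjacent_intervals
    (a := fun k : ℕ => (k:ℝ)/N) (n := N) (f := φ) (μ := volume) ?_
  · have ha0 : ((0:ℕ):ℝ)/N = 0 := by norm_num
    have haN : ((N:ℕ):ℝ)/N = 1 := by field_simp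
    rw [ha0, haN] at hsum
    have h01 : ∫ x in (0:ℝ)..1, φ x = ∫ x in Ioo (0:ℝ) 1, φ x := by
      rw [intervalIntegral.integral_of_le zero_le_one, integral_Ioc_eq_integral_Ioo]
    rw [← h01, ← hsum, Finset.mul_sum]
    apply Finset.sum_congr rfl
    intro i hi
    have hi' := Finset.mem_range.1 hi
    have : ((i+1:ℕ):ℝ)/N = ((i:ℝ)+1)/N := by push_cast; ring
    rw [this, intervalIntegral.integral_of_le (hle i), key i hi']
    ring
  · intro k hk
    have hcast : ((k+1:ℕ):ℝ)/N = ((k:ℝ)+1)/N := by push_cast; ring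
    show IntervalIntegrable φ volume ((k:ℝ)/N) (((k+1:ℕ):ℝ)/N)
    rw [hcast]
    exact hII k hk

lemma step_integrableOn {N : ℕ} (hN : 1 ≤ N) {φ : ℝ → ℝ} {c : ℕ → ℝ}
    (hφ : ∀ i < N, ∀ x ∈ Ico ((i:ℝ)/N) (((i:ℝ)+1)/N), φ x = c i) :
    IntegrableOn φ (Ioo (0:ℝ) 1) := by
  have hsub : Ioo (0:ℝ) 1 ⊆ ⋃ i ∈ Finset.range N, Ico ((i:ℝ)/N) (((i:ℝ)+1)/N) := by
    intro x hx
    obtain ⟨hlt, hmem⟩ := floor_toNat_lt hN hx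
    exact Set.mem_biUnion (Finset.mem_range.2 hlt) hmem
  refine IntegrableOn.mono_set ?_ hsub
  rw [integrableOn_finset_iUnion]
  intro i hi
  rw [integrableOn_congr_fun (hφ i (Finset.mem_range.1 hi)) measurableSet_Ico]
  exact integrableOn_const measure_Ico_lt_top.ne
-- appended to stage1
lemma cell_subset_Icc {N : ℕ} (hN : 1 ≤ N) {i : ℕ} (hi : i < N) :
    Icc ((i:ℝ)/N) (((i:ℝ)+1)/N) ⊆ Icc (0:ℝ) 1 := by
  have hN0 : (0:ℝ) < N := by exact_mod_cast hN
  apply Icc_subset_Icc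
  · positivity
  · rw [div_le_one hN0]
    have : (i:ℝ) + 1 ≤ N := by exact_mod_cast hi
    linarith

lemma intervalIntegrable_cell {N : ℕ} (hN : 1 ≤ N) {i : ℕ} (hi : i < N) {f : ℝ → ℝ}
    (hf : IntegrableOn f (Icc (0:ℝ) 1)) :
    IntervalIntegrable f volume ((i:ℝ)/N) (((i:ℝ)+1)/N) := by
  apply IntegrableOn.intervalIntegrable
  refine hf.mono_set ?_
  rw [uIcc_of_le ((div_le_div_iff_of_pos_right (by exact_mod_cast hN)).2 (by linarith))]
  exact cell_subset_Icc hN hi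

lemma integrableOn_Icc_of_integrable_muOmega {f : ℝ → ℝ}
    (hf : IntegrableOn f (Ioo (0:ℝ) 1)) : IntegrableOn f (Icc (0:ℝ) 1) := by
  have h2 : IntegrableOn f ({0, 1} : Set ℝ) := by
    have hz : volume.restrict ({0, 1} : Set ℝ) = 0 := by
      rw [Measure.restrict_eq_zero]
      exact (Set.toFinite ({0,1} : Set ℝ)).measure_zero volume
    unfold IntegrableOn
    rw [hz]
    exact integrable_zero_measure
  have : Icc (0:ℝ) 1 ⊆ Ioo (0:ℝ) 1 ∪ {0, 1} := by
    intro x hx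
    rcases eq_or_lt_of_le hx.1 with h | h
    · exact Or.inr (Or.inl h.symm)
    rcases eq_or_lt_of_le hx.2 with h' | h'
    · exact Or.inr (Or.inr h')
    · exact Or.inl ⟨h, h'⟩
  exact (hf.union h2).mono_set this

lemma sum_cell_integrals {N : ℕ} (hN : 1 ≤ N) {f : ℝ → ℝ}
    (hf : IntegrableOn f (Icc (0:ℝ) 1)) :
    ∑ i ∈ Finset.range N, ∫ t in ((i:ℝ)/N)..(((i:ℝ)+1)/N), f t
      = ∫ x in Ioo (0:ℝ) 1, f x := by
  have hN0 : (0:ℝ) < N := by exact_mod_cast hN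
  have hsum := intervalIntegral.sum_integral_adjacent_intervals
    (a := fun k : ℕ => (k:ℝ)/N) (n := N) (f := f) (μ := volume) ?_
  · have ha0 : ((0:ℕ):ℝ)/N = 0 := by norm_num
    have haN : ((N:ℕ):ℝ)/N = 1 := by field_simp
    rw [ha0, haN] at hsum
    have h01 : ∫ x in (0:ℝ)..1, f x = ∫ x in Ioo (0:ℝ) 1, f x := by
      rw [intervalIntegral.integral_of_le zero_le_one, integral_Ioc_eq_integral_Ioo]
    rw [← h01, ← hsum]
    apply Finset.sum_congr rfl
    intro i hi
    have : ((i+1:ℕ):ℝ)/N = ((i:ℝ)+1)/N := by push_cast; ring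
    rw [this]
  · intro k hk
    have hcast : ((k+1:ℕ):ℝ)/N = ((k:ℝ)+1)/N := by push_cast; ring
    show IntervalIntegrable f volume ((k:ℝ)/N) (((k+1:ℕ):ℝ)/N)
    rw [hcast]
    exact intervalIntegrable_cell hN hk hf

lemma integral_cavg {N : ℕ} (hN : 1 ≤ N) {f : ℝ → ℝ}
    (hf : IntegrableOn f (Icc (0:ℝ) 1)) :
    ∫ x in Ioo (0:ℝ) 1, cavg f N x = ∫ x in Ioo (0:ℝ) 1, f x := by
  have hN0 : (0:ℝ) < N := by exact_mod_cast hN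
  rw [step_integral hN (c := fun i => (N:ℝ) * ∫ t in ((i:ℝ)/N)..(((i:ℝ)+1)/N), f t)
    (fun i hi x hx => cavg_eq_of_mem_cell hN hx f)]
  rw [← sum_cell_integrals hN hf, Finset.mul_sum]
  apply Finset.sum_congr rfl
  intro i _
  field_simp

lemma cavg_integrableOn {N : ℕ} (hN : 1 ≤ N) (f : ℝ → ℝ) (h : ℝ → ℝ) :
    IntegrableOn (fun x => h (cavg f N x)) (Ioo (0:ℝ) 1) :=
  step_integrableOn hN (c := fun i => h ((N:ℝ) * ∫ t in ((i:ℝ)/N)..(((i:ℝ)+1)/N), f t))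
    (fun i hi x hx => by rw [cavg_eq_of_mem_cell hN hx f])

lemma abs_cavg_le {N : ℕ} (hN : 1 ≤ N) {f : ℝ → ℝ}
    (hf : IntegrableOn f (Icc (0:ℝ) 1)) {x : ℝ} (hx : x ∈ Ioo (0:ℝ) 1) :
    |cavg f N x| ≤ cavg (fun t => |f t|) N x := by
  have hN0 : (0:ℝ) < N := by exact_mod_cast hN
  obtain ⟨hlt, hmem⟩ := floor_toNat_lt hN hx
  rw [cavg_eq_of_mem_cell hN hmem f, cavg_eq_of_mem_cell hN hmem (fun t => |f t|)]
  rw [abs_mul, abs_of_pos hN0]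
  apply mul_le_mul_of_nonneg_left _ (le_of_lt hN0)
  exact intervalIntegral.abs_integral_le_integral_abs
    ((div_le_div_iff_of_pos_right hN0).2 (by linarith))

lemma cavg_congr_ae {N : ℕ} (hN : 1 ≤ N) {f g : ℝ → ℝ}
    (h : f =ᵐ[volume.restrict (Ioo (0:ℝ) 1)] g) {x : ℝ} (hx : x ∈ Ioo (0:ℝ) 1) :
    cavg f N x = cavg g N x := by
  have hN0 : (0:ℝ) < N := by exact_mod_cast hN
  obtain ⟨hlt, hmem⟩ := floor_toNat_lt hN hx
  set i := ⌊(N:ℝ)*x⌋.toNat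
  rw [cavg_eq_of_mem_cell hN hmem f, cavg_eq_of_mem_cell hN hmem g]
  congr 1
  have hle : (i:ℝ)/N ≤ ((i:ℝ)+1)/N := (div_le_div_iff_of_pos_right hN0).2 (by linarith)
  rw [intervalIntegral.integral_of_le hle, intervalIntegral.integral_of_le hle]
  apply integral_congr_ae
  show f =ᵐ[volume.restrict (Ioc ((i:ℝ)/N) (((i:ℝ)+1)/N))] g
  have h' : ∀ᵐ x ∂volume, x ∈ Ioo (0:ℝ) 1 → f x = g x :=
    (ae_restrict_iff' measurableSet_Ioo).1 h
  have h1 : ∀ᵐ y ∂volume, y ≠ (1:ℝ) := by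
    refine ae_iff.2 ?_
    simpa using Real.volume_singleton (x := (1:ℝ))
  rw [Filter.EventuallyEq, ae_restrict_iff' measurableSet_Ioc]
  filter_upwards [h', h1] with y hy hy1
  intro hyIoc
  apply hy
  have h0l : (0:ℝ) ≤ (i:ℝ)/N := by positivity
  have hr1 : ((i:ℝ)+1)/N ≤ 1 := by
    rw [div_le_one hN0]
    exact_mod_cast hlt
  exact ⟨lt_of_le_of_lt h0l hyIoc.1, lt_of_le_of_ne (le_trans hyIoc.2 hr1) hy1⟩
-- stage 3
lemma cavg_pos {N : ℕ} (hN : 1 ≤ N) {P : ℝ → ℝ} (hPpos : ∀ x, 0 < P x)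
    (hPi : IntegrableOn P (Icc (0:ℝ) 1)) {x : ℝ} (hx : x ∈ Ioo (0:ℝ) 1) :
    0 < cavg P N x := by
  have hN0 : (0:ℝ) < N := by exact_mod_cast hN
  obtain ⟨hlt, hmem⟩ := floor_toNat_lt hN hx
  set i := ⌊(N:ℝ)*x⌋.toNat
  rw [cavg_eq_of_mem_cell hN hmem P]
  have hle : (i:ℝ)/N < ((i:ℝ)+1)/N := (div_lt_div_iff_of_pos_right hN0).2 (by linarith)
  apply mul_pos hN0
  rw [intervalIntegral.integral_of_le hle.le]
  rw [setIntegral_pos_iff_support_of_nonneg_ae]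
  · have hsupp : Function.support P ∩ Ioc ((i:ℝ)/N) (((i:ℝ)+1)/N)
        = Ioc ((i:ℝ)/N) (((i:ℝ)+1)/N) := by
      apply Set.inter_eq_self_of_subset_right
      intro y _
      exact ne_of_gt (hPpos y)
    rw [hsupp, Real.volume_Ioc]
    simp only [ENNReal.ofReal_pos]
    linarith
  · exact Filter.Eventually.of_forall (fun y => (hPpos y).le)
  · exact (hPi.mono_set (fun y hy => cell_subset_Icc hN hlt ⟨hy.1.le, hy.2⟩))

/-- existence of a supporting line for a convex function on `Ioi 0`. -/
lemma exists_subgradient {W₁ : ℝ → ℝ} (hW₁ : ConvexOn ℝ (Set.Ioi 0) W₁)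
    {a : ℝ} (ha : 0 < a) :
    ∃ m : ℝ, ∀ y > (0:ℝ), W₁ a + m * (y - a) ≤ W₁ y := by
  set S : Set ℝ := (fun z => (W₁ z - W₁ a) / (z - a)) '' Ioi a with hS
  have hSne : S.Nonempty := ⟨_, ⟨a + 1, by simp [mem_Ioi], rfl⟩⟩
  have hbdd : BddBelow S := by
    refine ⟨(W₁ a - W₁ (a/2)) / (a - a/2), ?_⟩
    rintro _ ⟨z, hz, rfl⟩
    exact hW₁.slope_mono_adjacent (by simp [mem_Ioi]; linarith) (lt_trans ha hz)
      (by linarith) hz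
  set m := sInf S with hm
  refine ⟨m, fun y hy => ?_⟩
  rcases lt_trichotomy y a with hya | hya | hya
  · -- y < a : slope (y, a) ≤ m
    have hslope : (W₁ a - W₁ y) / (a - y) ≤ m := by
      apply le_csInf hSne
      rintro _ ⟨z, hz, rfl⟩
      exact hW₁.slope_mono_adjacent hy (lt_trans ha hz) hya hz
    have hpos : 0 < a - y := by linarith
    nlinarith [((div_le_iff₀ hpos).1 hslope)]
  · simp [hya]
  · -- a < y : m ≤ slope (a, y)
    have hslope : m ≤ (W₁ y - W₁ a) / (y - a) :=
      csInf_le hbdd ⟨y, hya, rfl⟩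
    have hpos : 0 < y - a := by linarith
    nlinarith [((le_div_iff₀ hpos).1 hslope)]

/-- Jensen's inequality on one cell. -/
lemma jensen_cell {N : ℕ} (hN : 1 ≤ N) {i : ℕ} (hi : i < N)
    {W₁ P : ℝ → ℝ} (hW₁ : ConvexOn ℝ (Set.Ioi 0) W₁)
    (hPpos : ∀ x, 0 < P x) (hPi : IntegrableOn P (Icc (0:ℝ) 1))
    (hWPi : IntegrableOn (fun x => W₁ (P x)) (Icc (0:ℝ) 1)) :
    W₁ ((N:ℝ) * ∫ t in ((i:ℝ)/N)..(((i:ℝ)+1)/N), P t) * (1/N)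
      ≤ ∫ t in ((i:ℝ)/N)..(((i:ℝ)+1)/N), W₁ (P t) := by
  have hN0 : (0:ℝ) < N := by exact_mod_cast hN
  set l := (i:ℝ)/N
  set r := ((i:ℝ)+1)/N
  have hlr : l < r := (div_lt_div_iff_of_pos_right hN0).2 (by linarith)
  have hsub : Ioc l r ⊆ Icc (0:ℝ) 1 := fun y hy => cell_subset_Icc hN hi ⟨hy.1.le, hy.2⟩
  have hPI : IntegrableOn P (Ioc l r) := hPi.mono_set hsub
  have hWPI : IntegrableOn (fun x => W₁ (P x)) (Ioc l r) := hWPi.mono_set hsub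
  set a := (N:ℝ) * ∫ t in l..r, P t with hadef
  have hInt : ∫ t in l..r, P t = ∫ t in Ioc l r, P t := intervalIntegral.integral_of_le hlr.le
  have hapos : 0 < a := by
    have := cavg_pos hN hPpos hPi (x := (l + r)/2) ?_
    · rwa [cavg_eq_of_mem_cell hN (i := i) ⟨by simp only [l] at *; linarith,
        by simp only [r] at *; linarith⟩ P] at this
    · constructor
      · have h0l : (0:ℝ) ≤ l := by positivity
        linarith
      · have hr1 : r ≤ 1 := by
          rw [div_le_one hN0]
          exact_mod_cast hi
        linarith
  obtain ⟨m, hm⟩ := exists_subgradient hW₁ hapos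
  have h1 : Integrable (fun _ : ℝ => W₁ a) (volume.restrict (Ioc l r)) := integrable_const _
  have h2 : Integrable (fun t : ℝ => m * (P t - a)) (volume.restrict (Ioc l r)) := by
    have h3 : Integrable (fun t : ℝ => P t - a) (volume.restrict (Ioc l r)) :=
      hPI.sub (integrable_const _)
    exact h3.const_mul m
  have hmono : ∫ t in Ioc l r, (W₁ a + m * (P t - a)) ≤ ∫ t in Ioc l r, W₁ (P t) := by
    apply setIntegral_mono_on
    · exact h1.add h2
    · exact hWPI
    · exact measurableSet_Ioc
    · exact fun t _ => hm (P t) (hPpos t)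
  have hvol : (volume (Ioc l r)).toReal = 1/N := by
    rw [Real.volume_Ioc]
    rw [show r - l = 1/N from cell_length hN i]
    exact ENNReal.toReal_ofReal (by positivity)
  have hcompute : ∫ t in Ioc l r, (W₁ a + m * (P t - a)) = W₁ a * (1/N) := by
    rw [integral_add h1 h2, integral_const_mul,
      integral_sub hPI (integrable_const _), setIntegral_const, setIntegral_const,
      measureReal_def, hvol, ← hInt]
    have ha' : ∫ t in l..r, P t = a * (1/N) := by
      rw [hadef]; field_simp
    rw [ha', smul_eq_mul, smul_eq_mul]
    ring
  calc W₁ a * (1/(N:ℝ)) = ∫ t in Ioc l r, (W₁ a + m * (P t - a)) := hcompute.symm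
  _ ≤ ∫ t in Ioc l r, W₁ (P t) := hmono
  _ = ∫ t in l..r, W₁ (P t) := (intervalIntegral.integral_of_le hlr.le).symm

/-- Jensen's inequality: the averaged energy is below the original. -/
lemma jensen_global {N : ℕ} (hN : 1 ≤ N)
    {W₁ P : ℝ → ℝ} (hW₁ : ConvexOn ℝ (Set.Ioi 0) W₁)
    (hPpos : ∀ x, 0 < P x) (hPi : IntegrableOn P (Icc (0:ℝ) 1))
    (hWPi : IntegrableOn (fun x => W₁ (P x)) (Icc (0:ℝ) 1)) :
    ∫ x in Ioo (0:ℝ) 1, W₁ (cavg P N x) ≤ ∫ x in Ioo (0:ℝ) 1, W₁ (P x) := by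
  rw [step_integral hN
    (c := fun i => W₁ ((N:ℝ) * ∫ t in ((i:ℝ)/N)..(((i:ℝ)+1)/N), P t))
    (fun i hi x hx => by rw [cavg_eq_of_mem_cell hN hx P])]
  rw [← sum_cell_integrals hN hWPi, Finset.mul_sum]
  apply Finset.sum_le_sum
  intro i hi
  rw [mul_comm]
  exact jensen_cell hN (Finset.mem_range.1 hi) hW₁ hPpos hPi hWPi
-- stage 4 : L¹ convergence of cavg
lemma cavg_sub {N : ℕ} (hN : 1 ≤ N) {f g : ℝ → ℝ}
    (hf : IntegrableOn f (Icc (0:ℝ) 1)) (hg : IntegrableOn g (Icc (0:ℝ) 1))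
    {x : ℝ} (hx : x ∈ Ioo (0:ℝ) 1) :
    cavg (fun t => f t - g t) N x = cavg f N x - cavg g N x := by
  obtain ⟨hlt, hmem⟩ := floor_toNat_lt hN hx
  rw [cavg_eq_of_mem_cell hN hmem f, cavg_eq_of_mem_cell hN hmem g,
    cavg_eq_of_mem_cell hN hmem (fun t => f t - g t)]
  rw [intervalIntegral.integral_sub (intervalIntegrable_cell hN hlt hf)
    (intervalIntegrable_cell hN hlt hg)]
  ring

/-- uniform approximation of a continuous function by its cell averages -/
lemma cavg_unif {g : ℝ → ℝ} (hg : ContinuousOn g (Icc (0:ℝ) 1)) {ε : ℝ} (hε : 0 < ε) :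
    ∃ N₀ : ℕ, 1 ≤ N₀ ∧ ∀ N ≥ N₀, ∀ x ∈ Ioo (0:ℝ) 1, |cavg g N x - g x| ≤ ε := by
  have hu := isCompact_Icc.uniformContinuousOn_of_continuous hg
  rw [Metric.uniformContinuousOn_iff] at hu
  obtain ⟨δ, hδ, hδ'⟩ := hu ε hε
  refine ⟨⌈1/δ⌉₊ + 1, le_add_self, fun N hNge x hx => ?_⟩
  have hN : 1 ≤ N := le_trans le_add_self hNge
  have hN0 : (0:ℝ) < N := by exact_mod_cast hN
  have hNδ : 1/(N:ℝ) < δ := by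
    rw [div_lt_iff₀ hN0]
    have h1 : 1/δ < ((⌈1/δ⌉₊ + 1 : ℕ) : ℝ) := by
      push_cast
      exact lt_of_le_of_lt (Nat.le_ceil _) (by linarith)
    have h2 : ((⌈1/δ⌉₊ + 1 : ℕ) : ℝ) ≤ N := by exact_mod_cast hNge
    calc (1:ℝ) = δ * (1/δ) := by field_simp
    _ < δ * N := by
      apply mul_lt_mul_of_pos_left _ hδ
      linarith
  obtain ⟨hlt, hmem⟩ := floor_toNat_lt hN hx
  set i := ⌊(N:ℝ)*x⌋.toNat with hidef
  set l := (i:ℝ)/N with hl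
  set r := ((i:ℝ)+1)/N with hr
  have hlr : l < r := (div_lt_div_iff_of_pos_right hN0).2 (by linarith)
  have hrl : r - l = 1/N := cell_length hN i
  have hIcc : Icc l r ⊆ Icc (0:ℝ) 1 := cell_subset_Icc hN hlt
  have hgII : IntervalIntegrable g volume l r := intervalIntegrable_cell hN hlt hg.integrableOn_Icc
  have key : cavg g N x - g x = (N:ℝ) * ∫ t in l..r, (g t - g x) := by
    rw [show cavg g N x = (N:ℝ) * ∫ t in l..r, g t from cavg_eq_of_mem_cell hN hmem g,
      intervalIntegral.integral_sub hgII intervalIntegrable_const,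
      intervalIntegral.integral_const, hrl, smul_eq_mul]
    field_simp
    try ring
  rw [key, abs_mul, abs_of_pos hN0]
  have habs : |∫ t in l..r, (g t - g x)| ≤ ∫ t in l..r, |g t - g x| :=
    intervalIntegral.abs_integral_le_integral_abs hlr.le
  have hbound : ∫ t in l..r, |g t - g x| ≤ ∫ t in l..r, (ε : ℝ) := by
    apply intervalIntegral.integral_mono_on hlr.le
      ((hgII.sub intervalIntegrable_const).abs) intervalIntegrable_const
    intro t ht
    have htx : dist (g t) (g x) < ε := by
      apply hδ' t (hIcc ht) x ⟨hx.1.le, hx.2.le⟩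
      rw [Real.dist_eq]
      have h1 : |t - x| ≤ r - l := by
        rw [abs_le]
        constructor <;> [linarith [ht.1, hmem.2]; linarith [ht.2, hmem.1]]
      rw [hrl] at h1
      linarith
    rw [Real.dist_eq] at htx
    exact htx.le
  have hconst : ∫ t in l..r, (ε : ℝ) = (1/N) * ε := by
    rw [intervalIntegral.integral_const, hrl, smul_eq_mul]
  calc (N:ℝ) * |∫ t in l..r, (g t - g x)| ≤ (N:ℝ) * ((1/N) * ε) := by
        apply mul_le_mul_of_nonneg_left _ hN0.le
        rw [← hconst]
        exact le_trans habs hbound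
  _ = ε := by field_simp

/-- L¹ contraction of the averaging operator -/
lemma cavg_contraction {N : ℕ} (hN : 1 ≤ N) {f : ℝ → ℝ}
    (hf : IntegrableOn f (Icc (0:ℝ) 1)) :
    ∫ x in Ioo (0:ℝ) 1, |cavg f N x| ≤ ∫ x in Ioo (0:ℝ) 1, |f x| := by
  have habs : IntegrableOn (fun t => |f t|) (Icc (0:ℝ) 1) := hf.abs
  calc ∫ x in Ioo (0:ℝ) 1, |cavg f N x|
      ≤ ∫ x in Ioo (0:ℝ) 1, cavg (fun t => |f t|) N x := by
        apply setIntegral_mono_on (cavg_integrableOn hN f abs)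
          (cavg_integrableOn hN (fun t => |f t|) id) measurableSet_Ioo
        exact fun x hx => abs_cavg_le hN hf hx
  _ = ∫ x in Ioo (0:ℝ) 1, |f x| := integral_cavg hN habs

/-- main L¹ convergence of cell averages -/
lemma cavg_tendsto_L1 {P : ℝ → ℝ} (hPm : Measurable P)
    (hPI : IntegrableOn P (Ioo (0:ℝ) 1)) :
    Tendsto (fun N : ℕ => ∫ x in Ioo (0:ℝ) 1, |cavg P N x - P x|) atTop (nhds 0) := by
  have hPIcc : IntegrableOn P (Icc (0:ℝ) 1) := integrableOn_Icc_of_integrable_muOmega hPI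
  rw [Metric.tendsto_atTop]
  intro ε hε
  set p' : ℝ → ℝ := (Ioo (0:ℝ) 1).indicator P with hp'def
  have hp' : Integrable p' volume := by
    rw [hp'def, integrable_indicator_iff measurableSet_Ioo]
    exact hPI
  obtain ⟨g, _, hgL1, gcont, gint⟩ :=
    hp'.exists_hasCompactSupport_integral_sub_le (show (0:ℝ) < ε/4 by positivity)
  have hgIcc : IntegrableOn g (Icc (0:ℝ) 1) := gint.integrableOn
  have hp'Icc : IntegrableOn p' (Icc (0:ℝ) 1) := hp'.integrableOn
  have hdiff : IntegrableOn (fun t => p' t - g t) (Icc (0:ℝ) 1) := hp'Icc.sub hgIcc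
  have hdint : Integrable (fun t => p' t - g t) volume := hp'.sub gint
  obtain ⟨N₁, hN₁, hunif⟩ := cavg_unif gcont.continuousOn (show (0:ℝ) < ε/4 by positivity)
  have hIoo1 : (volume (Ioo (0:ℝ) 1)).toReal = 1 := by
    rw [Real.volume_Ioo]; norm_num
  refine ⟨N₁, fun N hNge => ?_⟩
  have hN : 1 ≤ N := le_trans hN₁ hNge
  -- pointwise identity and bound on (0,1)
  have hPp' : P =ᵐ[volume.restrict (Ioo (0:ℝ) 1)] p' := by
    filter_upwards [ae_restrict_mem measurableSet_Ioo] with x hx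
    rw [hp'def, Set.indicator_of_mem hx]
  have hpt : ∀ x ∈ Ioo (0:ℝ) 1, |cavg P N x - P x| ≤
      |cavg (fun t => p' t - g t) N x| + (|cavg g N x - g x| + |g x - P x|) := by
    intro x hx
    have h1 : cavg P N x = cavg p' N x := cavg_congr_ae hN hPp' hx
    have h2 : cavg (fun t => p' t - g t) N x = cavg p' N x - cavg g N x :=
      cavg_sub hN hp'Icc hgIcc hx
    have : cavg P N x - P x =
        cavg (fun t => p' t - g t) N x + ((cavg g N x - g x) + (g x - P x)) := by
      rw [h2, h1]; ring
    rw [this]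
    exact le_trans (abs_add_le _ _) (by gcongr; exact abs_add_le _ _)
  -- integrabilities on Ioo 0 1
  have hA : IntegrableOn (fun x => |cavg (fun t => p' t - g t) N x|) (Ioo (0:ℝ) 1) :=
    cavg_integrableOn hN _ abs
  have hB : IntegrableOn (fun x => |cavg g N x - g x|) (Ioo (0:ℝ) 1) :=
    ((cavg_integrableOn hN g id).sub (hgIcc.mono_set Ioo_subset_Icc_self)).abs
  have hC : IntegrableOn (fun x => |g x - P x|) (Ioo (0:ℝ) 1) :=
    ((hgIcc.mono_set Ioo_subset_Icc_self).sub hPI).abs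
  have hLHS : IntegrableOn (fun x => |cavg P N x - P x|) (Ioo (0:ℝ) 1) :=
    ((cavg_integrableOn hN P id).sub hPI).abs
  have hBC : Integrable (fun x => |cavg g N x - g x| + |g x - P x|)
      (volume.restrict (Ioo (0:ℝ) 1)) := hB.add hC
  have hABC : Integrable
      (fun x => |cavg (fun t => p' t - g t) N x| + (|cavg g N x - g x| + |g x - P x|))
      (volume.restrict (Ioo (0:ℝ) 1)) := hA.add hBC
  have hmono : ∫ x in Ioo (0:ℝ) 1, |cavg P N x - P x| ≤
      ∫ x in Ioo (0:ℝ) 1,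
        (|cavg (fun t => p' t - g t) N x| + (|cavg g N x - g x| + |g x - P x|)) :=
    setIntegral_mono_on hLHS hABC measurableSet_Ioo hpt
  rw [integral_add hA hBC, integral_add hB hC] at hmono
  -- term 1
  have hT1 : ∫ x in Ioo (0:ℝ) 1, |cavg (fun t => p' t - g t) N x| ≤ ε/4 := by
    calc ∫ x in Ioo (0:ℝ) 1, |cavg (fun t => p' t - g t) N x|
        ≤ ∫ x in Ioo (0:ℝ) 1, |p' x - g x| := cavg_contraction hN hdiff
    _ ≤ ∫ x, |p' x - g x| := by
        apply setIntegral_le_integral hdint.abs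
        exact Filter.Eventually.of_forall (fun x => abs_nonneg _)
    _ ≤ ε/4 := by
        have : ∀ x, |p' x - g x| = ‖p' x - g x‖ := fun x => (Real.norm_eq_abs _).symm
        simp_rw [this]
        exact hgL1
  -- term 2
  have hT2 : ∫ x in Ioo (0:ℝ) 1, |cavg g N x - g x| ≤ ε/4 := by
    calc ∫ x in Ioo (0:ℝ) 1, |cavg g N x - g x|
        ≤ ∫ _x in Ioo (0:ℝ) 1, (ε/4 : ℝ) :=
          setIntegral_mono_on hB (integrableOn_const measure_Ioo_lt_top.ne)
            measurableSet_Ioo (fun x hx => hunif N hNge x hx)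
    _ = ε/4 := by rw [setIntegral_const, measureReal_def, hIoo1, one_smul]
  -- term 3
  have hT3 : ∫ x in Ioo (0:ℝ) 1, |g x - P x| ≤ ε/4 := by
    have heq : ∫ x in Ioo (0:ℝ) 1, |g x - P x| = ∫ x in Ioo (0:ℝ) 1, |p' x - g x| := by
      apply integral_congr_ae
      filter_upwards [ae_restrict_mem measurableSet_Ioo] with x hx
      rw [hp'def, Set.indicator_of_mem hx, abs_sub_comm]
    rw [heq]
    calc ∫ x in Ioo (0:ℝ) 1, |p' x - g x| ≤ ∫ x, |p' x - g x| := by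
          apply setIntegral_le_integral hdint.abs
          exact Filter.Eventually.of_forall (fun x => abs_nonneg _)
    _ ≤ ε/4 := by
        have : ∀ x, |p' x - g x| = ‖p' x - g x‖ := fun x => (Real.norm_eq_abs _).symm
        simp_rw [this]
        exact hgL1
  have hnn : 0 ≤ ∫ x in Ioo (0:ℝ) 1, |cavg P N x - P x| :=
    integral_nonneg (fun x => abs_nonneg _)
  rw [Real.dist_eq, sub_zero, abs_of_nonneg hnn]
  linarith
-- stage 5 : W-term convergence
lemma measurable_comp_continuousOn {g f : ℝ → ℝ} (hg : ContinuousOn g (Ioi 0))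
    (hf : Measurable f) (hpos : ∀ x, 0 < f x) : Measurable (fun x => g (f x)) := by
  apply measurable_of_isOpen
  intro U hU
  obtain ⟨V, hV, hVeq⟩ := continuousOn_iff'.1 hg U hU
  have : (fun x => g (f x)) ⁻¹' U = f ⁻¹' (V ∩ Ioi 0) := by
    ext x
    have hx : f x ∈ Ioi 0 := hpos x
    constructor
    · intro h
      rw [← hVeq]
      exact ⟨h, hx⟩
    · intro h
      rw [← hVeq] at h
      exact h.1
  rw [this]
  exact hf (hV.measurableSet.inter measurableSet_Ioi)

lemma Q_tendstoInMeasure {P : ℝ → ℝ} (hPm : Measurable P)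
    (hPI : IntegrableOn P (Ioo (0:ℝ) 1)) :
    TendstoInMeasure (volume.restrict (Ioo (0:ℝ) 1))
      (fun N x => cavg P (max 1 N) x) atTop P := by
  have hL1 := cavg_tendsto_L1 hPm hPI
  have hmax : Tendsto (fun N : ℕ => max 1 N) atTop atTop :=
    tendsto_atTop_mono (fun N => le_max_right 1 N) tendsto_id
  have hL1' : Tendsto (fun N : ℕ => ∫ x in Ioo (0:ℝ) 1, |cavg P (max 1 N) x - P x|)
      atTop (nhds 0) := hL1.comp hmax
  apply tendstoInMeasure_of_tendsto_eLpNorm (p := 1) one_ne_zero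
    (fun N => (cavg_measurable P (max 1 N) id).aestronglyMeasurable)
    hPm.aestronglyMeasurable
  have heq : ∀ N : ℕ, eLpNorm ((fun x => cavg P (max 1 N) x) - P) 1
      (volume.restrict (Ioo (0:ℝ) 1))
      = ENNReal.ofReal (∫ x in Ioo (0:ℝ) 1, |cavg P (max 1 N) x - P x|) := by
    intro N
    have hint : Integrable (fun x => cavg P (max 1 N) x - P x)
        (volume.restrict (Ioo (0:ℝ) 1)) :=
      (cavg_integrableOn (le_max_left 1 N) P id).sub hPI
    have hfun : ((fun x => cavg P (max 1 N) x) - P) = fun x => cavg P (max 1 N) x - P x := rfl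
    rw [hfun, eLpNorm_one_eq_lintegral_enorm,
      ← ofReal_integral_norm_eq_lintegral_enorm hint]
    norm_num [Real.norm_eq_abs]

  have h2 := (ENNReal.continuous_ofReal.tendsto 0).comp hL1'
  rw [ENNReal.ofReal_zero] at h2
  exact Tendsto.congr (fun N => (heq N).symm) h2

lemma W_term_tendsto
    (W W₁ W₂ : ℝ → ℝ) (hsum : ∀ x > (0:ℝ), W x = W₁ x + W₂ x)
    (hW₁ : ConvexOn ℝ (Set.Ioi 0) W₁) (hW₂c : ContinuousOn W₂ (Set.Ioi 0))
    {C : ℝ} (hW₂b : ∀ x > (0:ℝ), |W₂ x| ≤ C)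
    {c₁ : ℝ} (hW₁lb : ∀ x > (0:ℝ), c₁ ≤ W₁ x)
    {P : ℝ → ℝ} (hPm : Measurable P) (hPpos : ∀ x, 0 < P x)
    (hPIcc : IntegrableOn P (Icc (0:ℝ) 1))
    (hW₁P : IntegrableOn (fun x => W₁ (P x)) (Icc (0:ℝ) 1))
    (hW₂P : IntegrableOn (fun x => W₂ (P x)) (Ioo (0:ℝ) 1)) :
    Tendsto (fun N : ℕ => ∫ x in Ioo (0:ℝ) 1, W (cavg P (max 1 N) x)) atTop
      (nhds ((∫ x in Ioo (0:ℝ) 1, W₁ (P x)) + ∫ x in Ioo (0:ℝ) 1, W₂ (P x))) := by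
  have hPIoo : IntegrableOn P (Ioo (0:ℝ) 1) := hPIcc.mono_set Ioo_subset_Icc_self
  have hW₁cont : ContinuousOn W₁ (Ioi (0:ℝ)) := hW₁.continuousOn isOpen_Ioi
  have hW₁PIoo : IntegrableOn (fun x => W₁ (P x)) (Ioo (0:ℝ) 1) :=
    hW₁P.mono_set Ioo_subset_Icc_self
  set T₁ := ∫ x in Ioo (0:ℝ) 1, W₁ (P x) with hT₁
  set Q : ℕ → ℝ → ℝ := fun N x => cavg P (max 1 N) x with hQdef
  have hQpos : ∀ N, ∀ x ∈ Ioo (0:ℝ) 1, 0 < Q N x :=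
    fun N x hx => cavg_pos (le_max_left 1 N) hPpos hPIcc hx
  have hTIM := Q_tendstoInMeasure hPm hPIoo
  apply tendsto_of_subseq_tendsto
  intro ns hns
  have hsubTIM : TendstoInMeasure (volume.restrict (Ioo (0:ℝ) 1))
      (fun k x => Q (ns k) x) atTop P := fun ε hε => (hTIM ε hε).comp hns
  obtain ⟨ms, _, hae⟩ := hsubTIM.exists_seq_tendsto_ae
  refine ⟨ms, ?_⟩
  set m : ℕ → ℕ := fun k => ns (ms k) with hmdef
  -- decomposition per k
  have hdecomp : ∀ k, ∫ x in Ioo (0:ℝ) 1, W (Q (m k) x)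
      = (∫ x in Ioo (0:ℝ) 1, W₁ (Q (m k) x)) + ∫ x in Ioo (0:ℝ) 1, W₂ (Q (m k) x) := by
    intro k
    have hcongr : ∫ x in Ioo (0:ℝ) 1, W (Q (m k) x)
        = ∫ x in Ioo (0:ℝ) 1, (W₁ (Q (m k) x) + W₂ (Q (m k) x)) := by
      apply setIntegral_congr_fun measurableSet_Ioo
      intro x hx
      exact hsum _ (hQpos (m k) x hx)
    rw [hcongr]
    exact integral_add (cavg_integrableOn (le_max_left 1 (m k)) P W₁)
      (cavg_integrableOn (le_max_left 1 (m k)) P W₂)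
  -- W₂ part via dominated convergence
  have hW₂tend : Tendsto (fun k => ∫ x in Ioo (0:ℝ) 1, W₂ (Q (m k) x)) atTop
      (nhds (∫ x in Ioo (0:ℝ) 1, W₂ (P x))) := by
    apply tendsto_integral_of_dominated_convergence (fun _ => C)
      (fun k => (cavg_measurable P (max 1 (m k)) W₂).aestronglyMeasurable)
      (integrable_const C)
    · intro k
      filter_upwards [ae_restrict_mem measurableSet_Ioo] with x hx
      rw [Real.norm_eq_abs]
      exact hW₂b _ (hQpos (m k) x hx)
    · filter_upwards [hae, ae_restrict_mem measurableSet_Ioo] with x hx _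
      exact ((hW₂c.continuousAt (Ioi_mem_nhds (hPpos x))).tendsto).comp hx
  -- W₁ part
  have hJensen : ∀ k, ∫ x in Ioo (0:ℝ) 1, W₁ (Q (m k) x) ≤ T₁ :=
    fun k => jensen_global (le_max_left 1 (m k)) hW₁ hPpos hPIcc hW₁P
  -- the positive-part sequence
  set d : ℕ → ℝ → ℝ := fun k x => max (W₁ (P x) - W₁ (Q (m k) x)) 0 with hddef
  have hsub' : ∀ k, Integrable (fun x => W₁ (P x) - W₁ (Q (m k) x))
      (volume.restrict (Ioo (0:ℝ) 1)) :=
    fun k => hW₁PIoo.sub (cavg_integrableOn (le_max_left 1 (m k)) P W₁)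
  have hdint : ∀ k, Integrable (d k) (volume.restrict (Ioo (0:ℝ) 1)) :=
    fun k => (hsub' k).pos_part
  have hdtend : Tendsto (fun k => ∫ x in Ioo (0:ℝ) 1, d k x) atTop (nhds 0) := by
    have hDCT : Tendsto (fun k => ∫ x in Ioo (0:ℝ) 1, d k x) atTop
        (nhds (∫ _x in Ioo (0:ℝ) 1, (0:ℝ))) := by
      apply tendsto_integral_of_dominated_convergence
        (fun x => |W₁ (P x)| + |c₁|)
        (fun k => (hdint k).1)
        (hW₁PIoo.abs.add (integrable_const _))
      · intro k
        filter_upwards [ae_restrict_mem measurableSet_Ioo] with x hx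
        rw [Real.norm_eq_abs, hddef]
        have h1 : c₁ ≤ W₁ (Q (m k) x) := hW₁lb _ (hQpos (m k) x hx)
        have h2 : W₁ (P x) - W₁ (Q (m k) x) ≤ |W₁ (P x)| + |c₁| := by
          have := le_abs_self (W₁ (P x))
          have := neg_abs_le c₁
          linarith
        rw [abs_of_nonneg (le_max_right _ 0)]
        apply max_le h2
        positivity
      · filter_upwards [hae] with x hx
        have hW₁x : Tendsto (fun k => W₁ (Q (m k) x)) atTop (nhds (W₁ (P x))) :=
          ((hW₁cont.continuousAt (Ioi_mem_nhds (hPpos x))).tendsto).comp hx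
        have hsubt := (tendsto_const_nhds (x := W₁ (P x)) (f := atTop)).sub hW₁x
        have hmax := hsubt.max (tendsto_const_nhds (x := (0:ℝ)))
        simpa using hmax
    simpa using hDCT
  have hW₁tend : Tendsto (fun k => ∫ x in Ioo (0:ℝ) 1, W₁ (Q (m k) x)) atTop (nhds T₁) := by
    have hle : ∀ k, T₁ - (∫ x in Ioo (0:ℝ) 1, W₁ (Q (m k) x)) ≤ ∫ x in Ioo (0:ℝ) 1, d k x := by
      intro k
      have hintQ := cavg_integrableOn (le_max_left 1 (m k)) P W₁
      rw [hT₁, ← integral_sub hW₁PIoo hintQ]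
      apply setIntegral_mono_on (hW₁PIoo.sub hintQ) (hdint k) measurableSet_Ioo
      intro x _
      exact le_max_left _ 0
    have hge : ∀ k, 0 ≤ T₁ - (∫ x in Ioo (0:ℝ) 1, W₁ (Q (m k) x)) :=
      fun k => sub_nonneg.2 (hJensen k)
    have hsq : Tendsto (fun k => T₁ - (∫ x in Ioo (0:ℝ) 1, W₁ (Q (m k) x))) atTop (nhds 0) :=
      tendsto_of_tendsto_of_tendsto_of_le_of_le tendsto_const_nhds hdtend hge hle
    have := (tendsto_const_nhds (x := T₁) (f := atTop)).sub hsq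
    simpa using this
  have := hW₁tend.add hW₂tend
  exact Tendsto.congr (fun k => (hdecomp k).symm) this
-- stage 6 : G-term convergence
lemma G_term_tendsto {G P : ℝ → ℝ} (hG : ContinuousOn G (Icc (0:ℝ) 1))
    (hPm : Measurable P) (hPpos : ∀ x, 0 < P x)
    (hPIcc : IntegrableOn P (Icc (0:ℝ) 1))
    (hP1 : ∫ x in Ioo (0:ℝ) 1, P x = 1)
    (hGP : IntegrableOn (fun x => G x * P x) (Ioo (0:ℝ) 1)) :
    Tendsto (fun N : ℕ => ∫ x in Ioo (0:ℝ) 1, cavg G (max 1 N) x * cavg P (max 1 N) x)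
      atTop (nhds (∫ x in Ioo (0:ℝ) 1, G x * P x)) := by
  have hPIoo : IntegrableOn P (Ioo (0:ℝ) 1) := hPIcc.mono_set Ioo_subset_Icc_self
  obtain ⟨M, hM⟩ := isCompact_Icc.exists_bound_of_continuousOn hG
  set M' : ℝ := max M 0 + 1 with hM'def
  have hM'pos : 0 < M' := by positivity
  have hM' : ∀ x ∈ Icc (0:ℝ) 1, |G x| ≤ M' := by
    intro x hx
    have := hM x hx
    rw [Real.norm_eq_abs] at this
    have : |G x| ≤ max M 0 := le_trans this (le_max_left M 0)
    linarith
  rw [Metric.tendsto_atTop]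
  intro ε hε
  obtain ⟨N₁, hN₁ge1, hunif⟩ := cavg_unif hG (show (0:ℝ) < ε/4 by positivity)
  have hL1 := Metric.tendsto_atTop.1 (cavg_tendsto_L1 hPm hPIoo)
    (ε/(4*M')) (by positivity)
  obtain ⟨N₂, hN₂⟩ := hL1
  refine ⟨max N₁ N₂, fun n hn => ?_⟩
  have h1n : 1 ≤ n := le_trans hN₁ge1 (le_trans (le_max_left _ _) hn)
  have hmaxn : max 1 n = n := max_eq_right h1n
  have hL1n : ∫ x in Ioo (0:ℝ) 1, |cavg P n x - P x| < ε/(4*M') := by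
    have := hN₂ n (le_trans (le_max_right _ _) hn)
    rw [Real.dist_eq, sub_zero] at this
    exact lt_of_le_of_lt (le_abs_self _) this
  -- integrabilities
  have hq_int : IntegrableOn (fun x => cavg P n x) (Ioo (0:ℝ) 1) :=
    cavg_integrableOn h1n P id
  have hgq_int : IntegrableOn (fun x => cavg G n x * cavg P n x) (Ioo (0:ℝ) 1) :=
    step_integrableOn h1n
      (c := fun i => ((n:ℝ) * ∫ t in ((i:ℝ)/n)..(((i:ℝ)+1)/n), G t)
        * ((n:ℝ) * ∫ t in ((i:ℝ)/n)..(((i:ℝ)+1)/n), P t))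
      (fun i hi x hx => by
        rw [cavg_eq_of_mem_cell h1n hx G, cavg_eq_of_mem_cell h1n hx P])
  have hdiff_int : Integrable (fun x => cavg P n x - P x)
      (volume.restrict (Ioo (0:ℝ) 1)) := hq_int.sub hPIoo
  have hqpos : ∀ x ∈ Ioo (0:ℝ) 1, 0 < cavg P n x :=
    fun x hx => cavg_pos h1n hPpos hPIcc hx
  -- pointwise bound
  have hpt : ∀ x ∈ Ioo (0:ℝ) 1, |cavg G n x * cavg P n x - G x * P x|
      ≤ (ε/4) * cavg P n x + M' * |cavg P n x - P x| := by
    intro x hx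
    have hxIcc : x ∈ Icc (0:ℝ) 1 := ⟨hx.1.le, hx.2.le⟩
    have key : cavg G n x * cavg P n x - G x * P x
        = (cavg G n x - G x) * cavg P n x + G x * (cavg P n x - P x) := by ring
    rw [key]
    calc |(cavg G n x - G x) * cavg P n x + G x * (cavg P n x - P x)|
        ≤ |(cavg G n x - G x) * cavg P n x| + |G x * (cavg P n x - P x)| := abs_add_le _ _
    _ = |cavg G n x - G x| * cavg P n x + |G x| * |cavg P n x - P x| := by
        rw [abs_mul, abs_mul, abs_of_pos (hqpos x hx)]
    _ ≤ (ε/4) * cavg P n x + M' * |cavg P n x - P x| := by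
        apply add_le_add
        · exact mul_le_mul_of_nonneg_right
            (hunif n (le_trans (le_max_left _ _) hn) x hx) (hqpos x hx).le
        · exact mul_le_mul_of_nonneg_right (hM' x hxIcc) (abs_nonneg _)
  -- bound the distance
  have hRHS : Integrable (fun x => (ε/4) * cavg P n x + M' * |cavg P n x - P x|)
      (volume.restrict (Ioo (0:ℝ) 1)) :=
    (hq_int.const_mul _).add (hdiff_int.abs.const_mul _)
  have hsub_int : Integrable (fun x => cavg G n x * cavg P n x - G x * P x)
      (volume.restrict (Ioo (0:ℝ) 1)) := hgq_int.sub hGP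
  have hstep1 : dist (∫ x in Ioo (0:ℝ) 1, cavg G n x * cavg P n x)
      (∫ x in Ioo (0:ℝ) 1, G x * P x)
      = |∫ x in Ioo (0:ℝ) 1, (cavg G n x * cavg P n x - G x * P x)| := by
    rw [Real.dist_eq, ← integral_sub hgq_int hGP]
  have hstep2 : |∫ x in Ioo (0:ℝ) 1, (cavg G n x * cavg P n x - G x * P x)|
      ≤ ∫ x in Ioo (0:ℝ) 1, |cavg G n x * cavg P n x - G x * P x| := by
    have := norm_integral_le_integral_norm (μ := volume.restrict (Ioo (0:ℝ) 1))
      (f := fun x => cavg G n x * cavg P n x - G x * P x)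
    simpa [Real.norm_eq_abs] using this
  have hstep3 : ∫ x in Ioo (0:ℝ) 1, |cavg G n x * cavg P n x - G x * P x|
      ≤ ∫ x in Ioo (0:ℝ) 1, ((ε/4) * cavg P n x + M' * |cavg P n x - P x|) :=
    setIntegral_mono_on hsub_int.abs hRHS measurableSet_Ioo hpt
  have hstep4 : ∫ x in Ioo (0:ℝ) 1, ((ε/4) * cavg P n x + M' * |cavg P n x - P x|)
      = (ε/4) * (∫ x in Ioo (0:ℝ) 1, cavg P n x)
        + M' * ∫ x in Ioo (0:ℝ) 1, |cavg P n x - P x| := by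
    rw [integral_add (hq_int.const_mul _) (hdiff_int.abs.const_mul _),
      integral_const_mul, integral_const_mul]
  have hq1 : ∫ x in Ioo (0:ℝ) 1, cavg P n x = 1 := by
    rw [integral_cavg h1n hPIcc, hP1]
  have hfinal : dist (∫ x in Ioo (0:ℝ) 1, cavg G n x * cavg P n x)
      (∫ x in Ioo (0:ℝ) 1, G x * P x) < ε := by
    rw [hstep1]
    calc |∫ x in Ioo (0:ℝ) 1, (cavg G n x * cavg P n x - G x * P x)|
        ≤ (ε/4) * (∫ x in Ioo (0:ℝ) 1, cavg P n x)
            + M' * ∫ x in Ioo (0:ℝ) 1, |cavg P n x - P x| :=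
          le_trans hstep2 (le_trans hstep3 (le_of_eq hstep4))
    _ = (ε/4) * 1 + M' * ∫ x in Ioo (0:ℝ) 1, |cavg P n x - P x| := by rw [hq1]
    _ < (ε/4) * 1 + M' * (ε/(4*M')) := by
        apply add_lt_add_right
        exact mul_lt_mul_of_pos_left hL1n hM'pos
    _ ≤ ε := by
        rw [show M' * (ε/(4*M')) = ε/4 by field_simp]
        linarith
  simpa [hmaxn] using hfinal
-- stage 7 : final assembly
/-- Convergence of energies under projection (well-preparedness of initial data). -/
theorem energy_convergence_of_projection
    (W W₁ W₂ G : ℝ → ℝ)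
    (hsum : ∀ x > (0:ℝ), W x = W₁ x + W₂ x)
    (hW₁ : ConvexOn ℝ (Set.Ioi 0) W₁)
    (hW₂c : ContinuousOn W₂ (Set.Ioi 0))
    (hW₂b : ∃ C, ∀ x > (0:ℝ), |W₂ x| ≤ C)
    (hWlb : ∃ c, ∀ x > (0:ℝ), c ≤ W x)
    (hG : ContinuousOn G (Set.Icc 0 1))
    (p : ℝ → ℝ) (hp : memP p)
    (hfin : Integrable (fun x => W (p x) - G x * p x) μΩ) :
    Filter.Tendsto (fun N : ℕ => energyN W G N (PNproj p N)) Filter.atTop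
      (nhds (energy W G p)) := by
  obtain ⟨hpm, hppos, hpint, hp1⟩ := hp
  obtain ⟨C, hC⟩ := hW₂b
  obtain ⟨c, hc⟩ := hWlb
  have hμ : μΩ = volume.restrict (Ioo (0:ℝ) 1) := rfl
  rw [hμ] at hppos hpint hfin
  -- the everywhere-positive representative
  set P : ℝ → ℝ := fun x => if 0 < p x then p x else 1 with hPdef
  have hPm : Measurable P :=
    Measurable.ite (measurableSet_lt measurable_const hpm) hpm measurable_const
  have hPpos : ∀ x, 0 < P x := by
    intro x
    by_cases h : 0 < p x <;> simp [hPdef, h]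
  have hPae : P =ᵐ[volume.restrict (Ioo (0:ℝ) 1)] p := by
    filter_upwards [hppos] with x hx
    simp [hPdef, hx]
  have hPI : IntegrableOn P (Ioo (0:ℝ) 1) := hpint.congr hPae.symm
  have hPIcc : IntegrableOn P (Icc (0:ℝ) 1) := integrableOn_Icc_of_integrable_muOmega hPI
  have hP1 : ∫ x in Ioo (0:ℝ) 1, P x = 1 := by
    rw [integral_congr_ae hPae]
    exact hp1
  -- integrability of the various pieces
  have hGmeas : AEStronglyMeasurable G (volume.restrict (Ioo (0:ℝ) 1)) :=
    (hG.mono Ioo_subset_Icc_self).aestronglyMeasurable measurableSet_Ioo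
  obtain ⟨M, hMb⟩ := isCompact_Icc.exists_bound_of_continuousOn hG
  set M' : ℝ := max M 0 + 1 with hM'def
  have hM' : ∀ x ∈ Icc (0:ℝ) 1, |G x| ≤ M' := by
    intro x hx
    have h1 := hMb x hx
    rw [Real.norm_eq_abs] at h1
    have : |G x| ≤ max M 0 := le_trans h1 (le_max_left M 0)
    linarith
  have hGp : Integrable (fun x => G x * p x) (volume.restrict (Ioo (0:ℝ) 1)) := by
    apply Integrable.mono' (hpint.abs.const_mul M') (hGmeas.mul hpm.aestronglyMeasurable)
    filter_upwards [ae_restrict_mem measurableSet_Ioo] with x hx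
    simp only [Pi.mul_apply]
    rw [Real.norm_eq_abs, abs_mul]
    exact mul_le_mul_of_nonneg_right (hM' x ⟨hx.1.le, hx.2.le⟩) (abs_nonneg _)
  have hGP : Integrable (fun x => G x * P x) (volume.restrict (Ioo (0:ℝ) 1)) := by
    apply hGp.congr
    filter_upwards [hPae] with x hx
    rw [hx]
  have hWp : Integrable (fun x => W (p x)) (volume.restrict (Ioo (0:ℝ) 1)) := by
    have h := hfin.add hGp
    apply h.congr
    apply Filter.Eventually.of_forall
    intro x
    simp only [Pi.add_apply]
    ring
  have hWP : Integrable (fun x => W (P x)) (volume.restrict (Ioo (0:ℝ) 1)) := by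
    apply hWp.congr
    filter_upwards [hPae] with x hx
    rw [hx]
  have hW₂P : Integrable (fun x => W₂ (P x)) (volume.restrict (Ioo (0:ℝ) 1)) := by
    apply Integrable.mono' (integrable_const C)
      (measurable_comp_continuousOn hW₂c hPm hPpos).aestronglyMeasurable
    apply Filter.Eventually.of_forall
    intro x
    rw [Real.norm_eq_abs]
    exact hC _ (hPpos x)
  have hW₁P : Integrable (fun x => W₁ (P x)) (volume.restrict (Ioo (0:ℝ) 1)) := by
    apply (hWP.sub hW₂P).congr
    apply Filter.Eventually.of_forall
    intro x
    simp only [Pi.sub_apply]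
    rw [hsum _ (hPpos x)]
    ring
  have hW₁PIcc : IntegrableOn (fun x => W₁ (P x)) (Icc (0:ℝ) 1) :=
    integrableOn_Icc_of_integrable_muOmega hW₁P
  have hW₁lb : ∀ x > (0:ℝ), c - C ≤ W₁ x := by
    intro x hx
    have h1 := hc x hx
    have h2 := (abs_le.1 (hC x hx)).2
    have h3 := hsum x hx
    linarith
  -- energy identity
  have hE : energy W G p = ((∫ x in Ioo (0:ℝ) 1, W₁ (P x)) + ∫ x in Ioo (0:ℝ) 1, W₂ (P x))
      - ∫ x in Ioo (0:ℝ) 1, G x * P x := by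
    unfold energy
    have e1 : ∫ x in Ioo (0:ℝ) 1, (W (p x) - G x * p x)
        = ∫ x in Ioo (0:ℝ) 1, (W (P x) - G x * P x) := by
      apply integral_congr_ae
      filter_upwards [hPae] with x hx
      rw [hx]
    rw [e1, integral_sub hWP hGP]
    congr 1
    have e2 : ∫ x in Ioo (0:ℝ) 1, W (P x)
        = ∫ x in Ioo (0:ℝ) 1, (W₁ (P x) + W₂ (P x)) := by
      apply integral_congr_ae
      apply Filter.Eventually.of_forall
      intro x
      exact hsum _ (hPpos x)
    rw [e2, integral_add hW₁P hW₂P]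
  -- the discretized energy as an integral of step functions
  have hgq_int : ∀ N : ℕ, 1 ≤ N →
      IntegrableOn (fun x => cavg G N x * cavg P N x) (Ioo (0:ℝ) 1) := by
    intro N hN
    exact step_integrableOn hN
      (c := fun i => ((N:ℝ) * ∫ t in ((i:ℝ)/N)..(((i:ℝ)+1)/N), G t)
        * ((N:ℝ) * ∫ t in ((i:ℝ)/N)..(((i:ℝ)+1)/N), P t))
      (fun i hi x hx => by
        rw [cavg_eq_of_mem_cell hN hx G, cavg_eq_of_mem_cell hN hx P])
  have hdisc : ∀ N : ℕ, 1 ≤ N → energyN W G N (PNproj p N)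
      = ∫ x in Ioo (0:ℝ) 1, (W (cavg P N x) - cavg G N x * cavg P N x) := by
    intro N hN
    have hN0 : (0:ℝ) < N := by exact_mod_cast hN
    have hproj : ∀ i : Fin N, PNproj p N i
        = (N:ℝ) * ∫ t in (((i:ℕ):ℝ)/N)..((((i:ℕ):ℝ)+1)/N), P t := by
      intro i
      have hi : (i:ℕ) < N := i.isLt
      have hiR : ((i:ℕ):ℝ) + 1 ≤ N := by exact_mod_cast hi
      set x : ℝ := (((i:ℕ):ℝ) + 1/2)/N with hxdef
      have hx1 : x ∈ Ico (((i:ℕ):ℝ)/N) ((((i:ℕ):ℝ)+1)/N) :=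
        ⟨(div_le_div_iff_of_pos_right hN0).2 (by linarith), (div_lt_div_iff_of_pos_right hN0).2 (by linarith)⟩
      have hx2 : x ∈ Ioo (0:ℝ) 1 := by
        constructor
        · apply div_pos ?_ hN0
          positivity
        · rw [hxdef, div_lt_one hN0]
          linarith
      have hPNp : PNproj p N i
          = (N:ℝ) * ∫ t in (((i:ℕ):ℝ)/N)..((((i:ℕ):ℝ)+1)/N), p t := rfl
      rw [hPNp, show (N:ℝ) * ∫ t in (((i:ℕ):ℝ)/N)..((((i:ℕ):ℝ)+1)/N), p t
          = cavg p N x from (cavg_eq_of_mem_cell hN hx1 p).symm,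
        cavg_congr_ae hN hPae.symm hx2, cavg_eq_of_mem_cell hN hx1 P]
    unfold energyN
    set F : ℕ → ℝ := fun j => W ((N:ℝ) * ∫ t in ((j:ℝ)/N)..(((j:ℝ)+1)/N), P t)
      - ((N:ℝ) * ∫ t in ((j:ℝ)/N)..(((j:ℝ)+1)/N), G t)
        * ((N:ℝ) * ∫ t in ((j:ℝ)/N)..(((j:ℝ)+1)/N), P t) with hF
    have hsum_eq : ∑ i : Fin N, (W (PNproj p N i) - GN G N i * PNproj p N i)
        = ∑ j ∈ Finset.range N, F j := by
      rw [← Fin.sum_univ_eq_sum_range F N]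
      apply Finset.sum_congr rfl
      intro i _
      rw [hproj i]
      rfl
    rw [hsum_eq]
    exact (step_integral hN (c := F) (fun i hi x hx => by
      rw [hF]
      simp only
      rw [cavg_eq_of_mem_cell hN hx P, cavg_eq_of_mem_cell hN hx G])).symm
  -- put everything together
  have hWt := W_term_tendsto W W₁ W₂ hsum hW₁ hW₂c hC hW₁lb hPm hPpos hPIcc hW₁PIcc hW₂P
  have hGt := G_term_tendsto hG hPm hPpos hPIcc hP1 hGP
  have hcomb := hWt.sub hGt
  rw [hE]
  refine Filter.Tendsto.congr' ?_ hcomb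
  filter_upwards [eventually_ge_atTop 1] with N hN
  rw [max_eq_right hN, hdisc N hN,
    integral_sub (cavg_integrableOn hN P W) (hgq_int N hN)]
end
end

section
/- Stretching of tangent vectors along the discrete flow: Assume (A1), W ∈ C²((0,∞)), G ∈ C([0,1]), and fix an integer N ≥ 1 and ζ ∈ ℝ^N. Let (p, y) solve the variational system along the flow. Then, defining ξ_i(t) := y_i(t)/k(p_i(t)), the function t ↦ (1/(2N))∑_{i=1}^N y_i(t)²/k(p_i(t)) is differentiable on (0,∞) and its derivative equals −(1/N)∑_{i=1}^N H_i(p(t))·(ξ_i(t) − λ_ξ(t)(p(t)))² + (1/N)∑_{i=1}^N y_i(t)·ζ_i for every t > 0. -/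
open MeasureTheory Real Set Filter

noncomputable section

/-- Weighted mean `λ_ξ(q)` of a covector `ξ` with weights `k(q)`. -/
def lamXi (k : ℝ → ℝ) (N : ℕ) (q ξ : Fin N → ℝ) : ℝ :=
  (∑ j, k (q j) * ξ j) / (∑ j, k (q j))

/-- The Onsager operator `K(q)ξ`. -/
def KN (k : ℝ → ℝ) (N : ℕ) (q ξ : Fin N → ℝ) : Fin N → ℝ :=
  fun i => k (q i) * (ξ i - lamXi k N q ξ)

/-- The Hessian weight `H_i(q)`. -/
def HN (k k' W' W'' G : ℝ → ℝ) (N : ℕ) (q : Fin N → ℝ) (i : Fin N) : ℝ :=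
  k (q i) * (k (q i) * W'' (q i)
    + 1 / 2 * k' (q i) * (W' (q i) - GN G N i - lamN k W' G N q))

/-- Stretching of tangent vectors along the discrete flow. -/
theorem stretching_of_tangent_vectors
    (k k' : ℝ → ℝ) (κl κu : ℝ)
    (hκl : 0 < κl) (hκlu : κl ≤ κu)
    (hk_cont : ContinuousOn k (Set.Ici 0))
    (hk_deriv : ∀ x > (0:ℝ), HasDerivAt k (k' x) x)
    (hk'_cont : ContinuousOn k' (Set.Ioi 0))
    (hk_bnd : ∀ x ≥ (0:ℝ), κl * x ≤ k x ∧ k x ≤ κu * x)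
    (W W' W'' : ℝ → ℝ)
    (hW' : ∀ x > (0:ℝ), HasDerivAt W (W' x) x)
    (hW'' : ∀ x > (0:ℝ), HasDerivAt W' (W'' x) x)
    (hW''c : ContinuousOn W'' (Set.Ioi 0))
    (G : ℝ → ℝ) (hG : ContinuousOn G (Set.Icc 0 1))
    (N : ℕ) (hN : 1 ≤ N) (ζ : Fin N → ℝ)
    (p y : ℝ → Fin N → ℝ)
    (hpP : ∀ t ∈ Set.Ici (0:ℝ), memPN N (p t))
    (hp : solvesODE k W' G N p)
    (hy0 : ∀ t ∈ Set.Ici (0:ℝ), ∑ i, y t i = 0)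
    (DV : (Fin N → ℝ) → (Fin N → ℝ) →L[ℝ] (Fin N → ℝ))
    (hDV : ∀ q : Fin N → ℝ, (∀ i, 0 < q i) → HasFDerivAt (VN k W' G N) (DV q) q)
    (hy : ∀ t ∈ Set.Ici (0:ℝ),
      HasDerivWithinAt y (DV (p t) (y t) + KN k N (p t) ζ) (Set.Ici 0) t) :
    ∀ t > (0:ℝ),
      HasDerivAt (fun τ => (1 / (2 * (N:ℝ))) * ∑ i, (y τ i)^2 / k (p τ i))
        (-(1 / (N:ℝ)) * ∑ i, HN k k' W' W'' G N (p t) i *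
            (y t i / k (p t i) - lamXi k N (p t) (fun j => y t j / k (p t j)))^2
          + (1 / (N:ℝ)) * ∑ i, y t i * ζ i) t := by
  intro t ht
  have ht0 : t ∈ Set.Ici (0:ℝ) := le_of_lt ht
  have hq : ∀ i, 0 < p t i := (hpP t ht0).1
  have hkpos : ∀ i, 0 < k (p t i) := fun i =>
    lt_of_lt_of_le (mul_pos hκl (hq i)) (hk_bnd _ (hq i).le).1
  have hkne : ∀ i, k (p t i) ≠ 0 := fun i => (hkpos i).ne'
  have hNe : Nonempty (Fin N) := ⟨⟨0, hN⟩⟩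
  have hSpos : 0 < ∑ j, k (p t j) :=
    Finset.sum_pos (fun j _ => hkpos j) Finset.univ_nonempty
  have hNne : (N:ℝ) ≠ 0 := Nat.cast_ne_zero.mpr (by omega)
  have h0 : ∑ i, y t i = 0 := hy0 t ht0
  -- λ_ξ = 0 since ∑ y = 0
  have hlxi : lamXi k N (p t) (fun j => y t j / k (p t j)) = 0 := by
    unfold lamXi
    have hnum : ∑ j, k (p t j) * (y t j / k (p t j)) = ∑ j, y t j :=
      Finset.sum_congr rfl fun j _ => by
        rw [mul_comm, div_mul_cancel₀ _ (hkne j)]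
    rw [hnum, h0, zero_div]
  -- componentwise Fréchet derivatives of k∘proj and W'∘proj at p t
  have hkj : ∀ j, HasFDerivAt (fun w : Fin N → ℝ => k (w j))
      (k' (p t j) • ContinuousLinearMap.proj j) (p t) := fun j => by
    have h := (hk_deriv (p t j) (hq j)).comp_hasFDerivAt (p t)
      ((ContinuousLinearMap.proj j : (Fin N → ℝ) →L[ℝ] ℝ).hasFDerivAt)
    exact h
  have hWj : ∀ j, HasFDerivAt (fun w : Fin N → ℝ => W' (w j))
      (W'' (p t j) • ContinuousLinearMap.proj j) (p t) := fun j => by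
    have h := (hW'' (p t j) (hq j)).comp_hasFDerivAt (p t)
      ((ContinuousLinearMap.proj j : (Fin N → ℝ) →L[ℝ] ℝ).hasFDerivAt)
    exact h
  -- lamN is differentiable at p t, with some derivative Llam
  obtain ⟨Llam, hLlam⟩ : ∃ L, HasFDerivAt (lamN k W' G N) L (p t) := by
    have hA := HasFDerivAt.fun_sum (u := Finset.univ)
      (fun j _ => (hkj j).mul ((hWj j).sub_const (GN G N j)))
    have hS := HasFDerivAt.fun_sum (u := Finset.univ)
      (fun (j : Fin N) (_ : j ∈ Finset.univ) => hkj j)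
    have hdiff : DifferentiableAt ℝ (lamN k W' G N) (p t) := by
      have heq : lamN k W' G N = fun w : Fin N → ℝ =>
          (∑ j, k (w j) * (W' (w j) - GN G N j)) * (∑ j, k (w j))⁻¹ := by
        funext w; rw [lamN, div_eq_mul_inv]
      rw [heq]
      exact hA.differentiableAt.mul (hS.differentiableAt.inv hSpos.ne')
    exact ⟨_, hdiff.hasFDerivAt⟩
  -- explicit formula for the components of DV (p t) (y t)
  have hDVy : ∀ i, DV (p t) (y t) i =
      -(k (p t i)) * (W'' (p t i) * y t i - Llam (y t))
        + (W' (p t i) - GN G N i - lamN k W' G N (p t)) *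
            (-(k' (p t i) * y t i)) := by
    intro i
    have hVi := ((hkj i).neg).mul (((hWj i).sub_const (GN G N i)).sub hLlam)
    have hcomp := (hasFDerivAt_pi'.mp (hDV (p t) hq)) i
    have huniq := hcomp.unique hVi
    have hval : DV (p t) (y t) i =
        ((ContinuousLinearMap.proj i).comp (DV (p t))) (y t) := rfl
    rw [hval, huniq]
    simp [ContinuousLinearMap.add_apply, ContinuousLinearMap.smul_apply,
      ContinuousLinearMap.sub_apply, ContinuousLinearMap.neg_apply,
      ContinuousLinearMap.proj_apply, smul_eq_mul]
  -- upgrade within-derivatives to genuine derivatives at t > 0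
  have hIci : Set.Ici (0:ℝ) ∈ nhds t := Ici_mem_nhds ht
  have hpt : HasDerivAt p (VN k W' G N (p t)) t := (hp t ht0).hasDerivAt hIci
  have hyt : HasDerivAt y (DV (p t) (y t) + KN k N (p t) ζ) t :=
    (hy t ht0).hasDerivAt hIci
  have hpi : ∀ i, HasDerivAt (fun τ => p τ i) (VN k W' G N (p t) i) t :=
    fun i => hasDerivAt_pi.mp hpt i
  have hyi : ∀ i, HasDerivAt (fun τ => y τ i)
      (DV (p t) (y t) i + KN k N (p t) ζ i) t :=
    fun i => hasDerivAt_pi.mp hyt i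
  -- derivative of each summand
  have hterm : ∀ i, HasDerivAt (fun τ => (y τ i)^2 / k (p τ i))
      ((2 * y t i * (DV (p t) (y t) i + KN k N (p t) ζ i) * k (p t i)
        - y t i ^ 2 * (k' (p t i) * VN k W' G N (p t) i)) / k (p t i) ^ 2) t := by
    intro i
    have hg : HasDerivAt (fun τ => k (p τ i))
        (k' (p t i) * VN k W' G N (p t) i) t :=
      (hk_deriv (p t i) (hq i)).comp t (hpi i)
    have h := ((hyi i).pow 2).div hg (hkne i)
    refine h.congr_deriv ?_
    push_cast
    simp only [Pi.pow_apply]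
    ring
  have hE : HasDerivAt (fun τ => (1 / (2 * (N:ℝ))) * ∑ i, (y τ i)^2 / k (p τ i))
      ((1 / (2 * (N:ℝ))) * ∑ i,
        (2 * y t i * (DV (p t) (y t) i + KN k N (p t) ζ i) * k (p t i)
          - y t i ^ 2 * (k' (p t i) * VN k W' G N (p t) i)) / k (p t i) ^ 2) t :=
    (HasDerivAt.fun_sum fun i _ => hterm i).const_mul _
  refine hE.congr_deriv ?_
  simp only [hlxi]
  calc
    (1 / (2 * (N:ℝ))) * ∑ i,
        (2 * y t i * (DV (p t) (y t) i + KN k N (p t) ζ i) * k (p t i)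
          - y t i ^ 2 * (k' (p t i) * VN k W' G N (p t) i)) / k (p t i) ^ 2
      = ∑ i, (-(1 / (N:ℝ)) * (HN k k' W' W'' G N (p t) i
            * (y t i / k (p t i) - 0) ^ 2)
          + (1 / (N:ℝ)) * (y t i * ζ i)
          + ((Llam (y t) - lamXi k N (p t) ζ) / (N:ℝ)) * y t i) := by
        rw [Finset.mul_sum]
        refine Finset.sum_congr rfl fun i _ => ?_
        rw [hDVy i]
        simp only [KN, VN, HN, sub_zero]
        have ha0 : k (p t i) ≠ 0 := hkne i
        set a := k (p t i) with ha
        set n := (N:ℝ) with hn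
        field_simp [ha0, hNne]
        ring
    _ = -(1 / (N:ℝ)) * ∑ i, HN k k' W' W'' G N (p t) i
            * (y t i / k (p t i) - 0) ^ 2
        + (1 / (N:ℝ)) * ∑ i, y t i * ζ i := by
        rw [Finset.sum_add_distrib, Finset.sum_add_distrib,
          ← Finset.mul_sum, ← Finset.mul_sum, ← Finset.mul_sum, h0,
          mul_zero, add_zero]
end
end

section
/- Lower bound for the contravariant Hessian: Assume (A1), W ∈ C²((0,∞)), G ∈ C([0,1]), fix an integer N ≥ 1 and p ∈ 𝐏_N. Suppose Λ₁ ∈ ℝ and C ≥ 0 satisfy k(q)·W''(q) + (1/2)·k'(q)·(W'(q) − G^N_i) ≥ Λ₁ for all q > 0 and all i = 1,…,N, and |k'(q)| ≤ C for all q > 0. Then for every ξ ∈ ℝ^N: (1/N)∑_{i=1}^N H_i(p)·(ξ_i − λ_ξ(p))² ≥ (Λ₁ − (C/2)·|λ(p)|)·(1/N)∑_{i=1}^N k(p_i)·(ξ_i − λ_ξ(p))². -/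
open MeasureTheory Real Set Filter

noncomputable section

/-!
The weighted mean `λ(p)` enters `H_i(p)` only through `-(1/2)·k'(p_i)·λ(p)`, which is at least
`-(C/2)·|λ(p)|`; with the assumed bound on `k·W'' + (1/2)·k'·(W' - G^N_i)` this gives
`H_i(p) ≥ (Λ₁ - (C/2)·|λ(p)|)·k(p_i)` for each `i`, since `k(p_i) ≥ 0`. Summing against the
nonnegative squares `(ξ_i - λ_ξ(p))²` yields the claim.
-/

theorem sub_half_mul_abs_le_add_half_mul_sub {Λ a b c l C : ℝ}
    (h : Λ ≤ a + 1 / 2 * b * c) (hb : |b| ≤ C) :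
    Λ - C / 2 * |l| ≤ a + 1 / 2 * b * (c - l) := by
  have hbl : b * l ≤ C * |l| :=
    calc b * l ≤ |b * l| := le_abs_self _
      _ = |b| * |l| := abs_mul b l
      _ ≤ C * |l| := mul_le_mul_of_nonneg_right hb (abs_nonneg l)
  linarith

theorem mul_sum_le_sum_of_mul_le {ι R : Type*} [CommSemiring R] [PartialOrder R]
    [IsOrderedRing R] (s : Finset ι) {Λ : R} {w h x : ι → R}
    (hx : ∀ i ∈ s, 0 ≤ x i) (hwh : ∀ i ∈ s, Λ * w i ≤ h i) :
    Λ * ∑ i ∈ s, w i * x i ≤ ∑ i ∈ s, h i * x i := by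
  rw [Finset.mul_sum]
  refine Finset.sum_le_sum fun i hi => ?_
  rw [← mul_assoc]
  exact mul_le_mul_of_nonneg_right (hwh i hi) (hx i hi)

theorem mul_le_HN {k k' W' W'' G : ℝ → ℝ} {N : ℕ} {q : Fin N → ℝ} {i : Fin N} {Λ₁ C : ℝ}
    (hk : 0 ≤ k (q i)) (hΛ : Λ₁ ≤ k (q i) * W'' (q i) + 1 / 2 * k' (q i) * (W' (q i) - GN G N i))
    (hk' : |k' (q i)| ≤ C) :
    (Λ₁ - C / 2 * |lamN k W' G N q|) * k (q i) ≤ HN k k' W' W'' G N q i := by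
  rw [HN, mul_comm]
  exact mul_le_mul_of_nonneg_left (sub_half_mul_abs_le_add_half_mul_sub hΛ hk') hk

theorem hessian_lower_bound_general
    (k k' : ℝ → ℝ) (κl κu : ℝ)
    (hκl : 0 < κl)
    (hk_bnd : ∀ x ≥ (0:ℝ), κl * x ≤ k x ∧ k x ≤ κu * x)
    (W' W'' : ℝ → ℝ)
    (G : ℝ → ℝ)
    (N : ℕ) (p : Fin N → ℝ) (hp : memPN N p)
    (Λ₁ C : ℝ)
    (hΛ : ∀ q > (0:ℝ), ∀ i : Fin N,
      Λ₁ ≤ k q * W'' q + 1 / 2 * k' q * (W' q - GN G N i))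
    (hk'C : ∀ q > (0:ℝ), |k' q| ≤ C) :
    ∀ ξ : Fin N → ℝ,
      (Λ₁ - C / 2 * |lamN k W' G N p|) *
          ((1 / (N:ℝ)) * ∑ i, k (p i) * (ξ i - lamXi k N p ξ)^2)
        ≤ (1 / (N:ℝ)) * ∑ i, HN k k' W' W'' G N p i * (ξ i - lamXi k N p ξ)^2 := by
  intro ξ
  have hk_nonneg (i : Fin N) : 0 ≤ k (p i) :=
    (mul_pos hκl (hp.1 i)).le.trans (hk_bnd (p i) (hp.1 i).le).1
  have hH (i : Fin N) : (Λ₁ - C / 2 * |lamN k W' G N p|) * k (p i) ≤ HN k k' W' W'' G N p i :=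
    mul_le_HN (hk_nonneg i) (hΛ (p i) (hp.1 i) i) (hk'C (p i) (hp.1 i))
  rw [mul_left_comm]
  exact mul_le_mul_of_nonneg_left
    (mul_sum_le_sum_of_mul_le _ (fun i _ => sq_nonneg _) (fun i _ => hH i)) (by positivity)

/-- Lower bound for the contravariant Hessian. -/
theorem hessian_lower_bound
    (k k' : ℝ → ℝ) (κl κu : ℝ)
    (hκl : 0 < κl) (hκlu : κl ≤ κu)
    (hk_cont : ContinuousOn k (Set.Ici 0))
    (hk_deriv : ∀ x > (0:ℝ), HasDerivAt k (k' x) x)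
    (hk'_cont : ContinuousOn k' (Set.Ioi 0))
    (hk_bnd : ∀ x ≥ (0:ℝ), κl * x ≤ k x ∧ k x ≤ κu * x)
    (W W' W'' : ℝ → ℝ)
    (hW' : ∀ x > (0:ℝ), HasDerivAt W (W' x) x)
    (hW'' : ∀ x > (0:ℝ), HasDerivAt W' (W'' x) x)
    (hW''c : ContinuousOn W'' (Set.Ioi 0))
    (G : ℝ → ℝ) (hG : ContinuousOn G (Set.Icc 0 1))
    (N : ℕ) (hN : 1 ≤ N) (p : Fin N → ℝ) (hp : memPN N p)
    (Λ₁ C : ℝ) (hC : 0 ≤ C)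
    (hΛ : ∀ q > (0:ℝ), ∀ i : Fin N,
      Λ₁ ≤ k q * W'' q + 1 / 2 * k' q * (W' q - GN G N i))
    (hk'C : ∀ q > (0:ℝ), |k' q| ≤ C) :
    ∀ ξ : Fin N → ℝ,
      (Λ₁ - C / 2 * |lamN k W' G N p|) *
          ((1 / (N:ℝ)) * ∑ i, k (p i) * (ξ i - lamXi k N p ξ)^2)
        ≤ (1 / (N:ℝ)) * ∑ i, HN k k' W' W'' G N p i * (ξ i - lamXi k N p ξ)^2 :=
  hessian_lower_bound_general k k' κl κu hκl hk_bnd W' W'' G N p hp Λ₁ C hΛ hk'C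
end
end

section
/- Uniform lower bound on the infinitesimal sublevel stretching rate: Assume (A1), (A3), W ∈ C²((0,∞)), and G ∈ C([0,1]). Then for every integer N ≥ 1, every E ∈ ℝ, every p ∈ Σ_N(E), and every ξ ∈ ℝ^N: (1/N)∑_{i=1}^N H_i(p)·(ξ_i − λ_ξ(p))² ≥ L^inf(E)·(1/N)∑_{i=1}^N k(p_i)·(ξ_i − λ_ξ(p))². In particular the infinitesimal sublevel stretching rate Λ_N^inf(E), defined as the supremum of all Λ ∈ ℝ for which this two-sided quadratic-form inequality holds for all p ∈ Σ_N(E) and all ξ ∈ ℝ^N, satisfies Λ_N^inf(E) ≥ L^inf(E) > −∞. -/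
open MeasureTheory Real Set Filter

noncomputable section

/-- The sup norm `‖G‖_∞` on `[0,1]`. -/
def supNorm (G : ℝ → ℝ) : ℝ := sSup ((fun x => |G x|) '' Set.Icc 0 1)

/-- The lower bound `L^inf(E)` for the infinitesimal sublevel stretching rate. -/
def Linf (lamW Ck B1 B2 κl κu nG E : ℝ) : ℝ :=
  lamW - Ck / 2 * ((1 + κu / κl) * nG + (B1 * (E + nG) + B2) / κl)

/-- Uniform lower bound on the infinitesimal sublevel stretching rate:
`L^inf(E)` is an admissible stretching bound on `Σ_N(E)`, for every `N`,
whence `Λ_N^inf(E) ≥ L^inf(E) > −∞`. -/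
theorem uniform_stretching_lower_bound
    (k k' : ℝ → ℝ) (κl κu : ℝ)
    (hκl : 0 < κl) (hκlu : κl ≤ κu)
    (hk_cont : ContinuousOn k (Set.Ici 0))
    (hk_deriv : ∀ x > (0:ℝ), HasDerivAt k (k' x) x)
    (hk'_cont : ContinuousOn k' (Set.Ioi 0))
    (hk_bnd : ∀ x ≥ (0:ℝ), κl * x ≤ k x ∧ k x ≤ κu * x)
    (W W' W'' : ℝ → ℝ)
    (hW' : ∀ x > (0:ℝ), HasDerivAt W (W' x) x)
    (hW'' : ∀ x > (0:ℝ), HasDerivAt W' (W'' x) x)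
    (hW''c : ContinuousOn W'' (Set.Ioi 0))
    (lamW Ck B1 B2 B3 : ℝ) (hCk : 0 ≤ Ck) (hB1 : 0 ≤ B1) (hB2 : 0 ≤ B2)
    (hA3a : ∀ x > (0:ℝ), lamW ≤ k x * W'' x + 1 / 2 * k' x * W' x)
    (hA3b : ∀ x > (0:ℝ), |k' x| ≤ Ck)
    (hA3c : ∀ x > (0:ℝ), |k x * W' x| ≤ B1 * W x + B2 + B3 * (x - 1))
    (G : ℝ → ℝ) (hG : ContinuousOn G (Set.Icc 0 1)) :
    ∀ N : ℕ, 1 ≤ N → ∀ E : ℝ, ∀ p : Fin N → ℝ,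
      memPN N p → energyN W G N p ≤ E → ∀ ξ : Fin N → ℝ,
        Linf lamW Ck B1 B2 κl κu (supNorm G) E *
            ((1 / (N:ℝ)) * ∑ i, k (p i) * (ξ i - lamXi k N p ξ)^2)
          ≤ (1 / (N:ℝ)) * ∑ i, HN k k' W' W'' G N p i * (ξ i - lamXi k N p ξ)^2 := by
  intro N hN E p hp hE ξ
  obtain ⟨hpos, hsum⟩ := hp
  have hN0 : (0:ℝ) < N := by exact_mod_cast hN
  set nG := supNorm G with hnGdef
  -- basic facts about the sup norm
  have hs_bdd : BddAbove ((fun x => |G x|) '' Set.Icc 0 1) :=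
    (isCompact_Icc.image_of_continuousOn hG.abs).bddAbove
  have hGle : ∀ x ∈ Set.Icc (0:ℝ) 1, |G x| ≤ nG := fun x hx =>
    le_csSup hs_bdd ⟨x, hx, rfl⟩
  have hnG0 : 0 ≤ nG := le_trans (abs_nonneg _) (hGle 0 (by norm_num))
  -- the discrete loads are bounded by nG
  have hGN : ∀ i : Fin N, |GN G N i| ≤ nG := by
    intro i
    have hi1 : ((i:ℝ) + 1) ≤ N := by exact_mod_cast i.2
    have hi0 : (0:ℝ) ≤ i := by positivity
    have hsub : Set.uIoc ((i:ℝ)/N) (((i:ℝ)+1)/N) ⊆ Set.Icc (0:ℝ) 1 := by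
      rw [Set.uIoc_of_le ((div_le_div_iff_of_pos_right hN0).mpr (by linarith))]
      intro x hx
      constructor
      · have : (0:ℝ) ≤ (i:ℝ)/N := by positivity
        linarith [hx.1]
      · have : ((i:ℝ)+1)/N ≤ 1 := by
          rw [div_le_one hN0]; exact hi1
        linarith [hx.2]
    have hb : ‖∫ x in ((i:ℝ)/N)..(((i:ℝ)+1)/N), G x‖ ≤ nG * |((i:ℝ)+1)/N - (i:ℝ)/N| := by
      apply intervalIntegral.norm_integral_le_of_norm_le_const
      intro x hx
      exact hGle x (hsub hx)
    have heq : ((i:ℝ)+1)/N - (i:ℝ)/N = 1/N := by field_simp; ring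
    rw [heq, abs_of_nonneg (by positivity : (0:ℝ) ≤ 1/(N:ℝ))] at hb
    rw [GN, abs_mul, abs_of_pos hN0]
    calc (N:ℝ) * |∫ x in ((i:ℝ)/N)..(((i:ℝ)+1)/N), G x| ≤ (N:ℝ) * (nG * (1/N)) := by
          exact mul_le_mul_of_nonneg_left hb hN0.le
      _ = nG := by field_simp
  -- total mass
  have hsump : ∑ i, p i = N := by
    field_simp at hsum; linarith
  -- positivity of weights
  have hk_pos : ∀ i, 0 < k (p i) := fun i =>
    lt_of_lt_of_le (mul_pos hκl (hpos i)) (hk_bnd _ (hpos i).le).1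
  set S := ∑ j, k (p j) with hSdef
  have hSl : κl * N ≤ S := by
    calc κl * N = ∑ i, κl * p i := by rw [← Finset.mul_sum, hsump]
      _ ≤ ∑ i, k (p i) := Finset.sum_le_sum fun i _ => (hk_bnd _ (hpos i).le).1
  have hSu : S ≤ κu * N := by
    calc S ≤ ∑ i, κu * p i := Finset.sum_le_sum fun i _ => (hk_bnd _ (hpos i).le).2
      _ = κu * N := by rw [← Finset.mul_sum, hsump]
  have hS : 0 < S := lt_of_lt_of_le (mul_pos hκl hN0) hSl
  -- energy sum bound
  have hE' : ∑ i, (W (p i) - GN G N i * p i) ≤ E * N := by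
    have : energyN W G N p = (∑ i, (W (p i) - GN G N i * p i)) / N := by
      rw [energyN]; ring
    rw [this, div_le_iff₀ hN0] at hE
    exact hE
  have hGp : ∑ i, GN G N i * p i ≤ nG * N := by
    calc ∑ i, GN G N i * p i ≤ ∑ i, nG * p i :=
          Finset.sum_le_sum fun i _ =>
            mul_le_mul_of_nonneg_right (le_trans (le_abs_self _) (hGN i)) (hpos i).le
      _ = nG * N := by rw [← Finset.mul_sum, hsump]
  have hWsum : ∑ i, W (p i) ≤ N * (E + nG) := by
    have hsplit : ∑ i, (W (p i) - GN G N i * p i)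
        = ∑ i, W (p i) - ∑ i, GN G N i * p i := Finset.sum_sub_distrib _ _
    linarith
  -- numerator bound for λ
  set A := B1 * (E + nG) + B2 + κu * nG with hAdef
  have hterm : ∀ i, |k (p i) * (W' (p i) - GN G N i)|
      ≤ (B1 * W (p i) + B2 + B3 * (p i - 1)) + nG * k (p i) := by
    intro i
    have h1 : |k (p i) * W' (p i)| ≤ B1 * W (p i) + B2 + B3 * (p i - 1) := hA3c _ (hpos i)
    have h2 : |k (p i) * GN G N i| ≤ nG * k (p i) := by
      rw [abs_mul, abs_of_pos (hk_pos i), mul_comm nG (k (p i))]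
      exact mul_le_mul_of_nonneg_left (hGN i) (hk_pos i).le
    calc |k (p i) * (W' (p i) - GN G N i)|
        = |k (p i) * W' (p i) - k (p i) * GN G N i| := by ring_nf
      _ ≤ |k (p i) * W' (p i)| + |k (p i) * GN G N i| := abs_sub _ _
      _ ≤ (B1 * W (p i) + B2 + B3 * (p i - 1)) + nG * k (p i) := add_le_add h1 h2
  have hnum : |∑ j, k (p j) * (W' (p j) - GN G N j)| ≤ N * A := by
    calc |∑ j, k (p j) * (W' (p j) - GN G N j)|
        ≤ ∑ j, |k (p j) * (W' (p j) - GN G N j)| := Finset.abs_sum_le_sum_abs _ _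
      _ ≤ ∑ j, ((B1 * W (p j) + B2 + B3 * (p j - 1)) + nG * k (p j)) :=
          Finset.sum_le_sum fun j _ => hterm j
      _ = B1 * (∑ j, W (p j)) + B2 * N + B3 * ((∑ j, p j) - N) + nG * S := by
          have c1 : ∑ j : Fin N, (B2:ℝ) = N * B2 := by
            simp [Finset.sum_const, Finset.card_univ, mul_comm]
          have c3 : ∑ j, B3 * (p j - 1) = B3 * ((∑ j, p j) - N) := by
            rw [← Finset.mul_sum, Finset.sum_sub_distrib]
            simp [Finset.sum_const, Finset.card_univ]
          have c4 : ∑ j, B1 * W (p j) = B1 * ∑ j, W (p j) := by rw [Finset.mul_sum]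
          have c5 : ∑ j, nG * k (p j) = nG * S := by rw [hSdef, Finset.mul_sum]
          calc ∑ j, ((B1 * W (p j) + B2 + B3 * (p j - 1)) + nG * k (p j))
              = (∑ j, B1 * W (p j)) + (∑ j : Fin N, (B2:ℝ)) + (∑ j, B3 * (p j - 1))
                + ∑ j, nG * k (p j) := by
                simp [Finset.sum_add_distrib]
            _ = B1 * (∑ j, W (p j)) + B2 * N + B3 * ((∑ j, p j) - N) + nG * S := by
                rw [c1, c3, c4, c5]; ring
      _ = B1 * (∑ j, W (p j)) + B2 * N + nG * S := by rw [hsump]; ring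
      _ ≤ B1 * (N * (E + nG)) + B2 * N + nG * (κu * N) := by
          have h5 := mul_le_mul_of_nonneg_left hWsum hB1
          have h6 := mul_le_mul_of_nonneg_left hSu hnG0
          linarith
      _ = N * A := by rw [hAdef]; ring
  have hNA : (0:ℝ) ≤ N * A := le_trans (abs_nonneg _) hnum
  have hA0 : (0:ℝ) ≤ A := nonneg_of_mul_nonneg_right hNA hN0
  -- bound on λ
  have hlam : |lamN k W' G N p| ≤ A / κl := by
    rw [lamN, abs_div, abs_of_pos hS, div_le_div_iff₀ hS hκl]
    calc |∑ j, k (p j) * (W' (p j) - GN G N j)| * κl ≤ (N * A) * κl :=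
          mul_le_mul_of_nonneg_right hnum hκl.le
      _ ≤ A * S := by nlinarith
  set M := (1 + κu / κl) * nG + (B1 * (E + nG) + B2) / κl with hMdef
  clear_value M
  have hM : nG + A / κl = M := by
    rw [hMdef, hAdef]
    field_simp
    ring
  -- pointwise bound
  have hpt : ∀ i, Linf lamW Ck B1 B2 κl κu nG E * k (p i) ≤ HN k k' W' W'' G N p i := by
    intro i
    have hxi := hpos i
    have ha := hA3a _ hxi
    have hb := hA3b _ hxi
    have habs : |k' (p i) * (GN G N i + lamN k W' G N p)| ≤ Ck * M := by
      rw [abs_mul]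
      have h3 : |GN G N i + lamN k W' G N p| ≤ M := by
        calc |GN G N i + lamN k W' G N p| ≤ |GN G N i| + |lamN k W' G N p| := abs_add_le _ _
          _ ≤ nG + A / κl := add_le_add (hGN i) hlam
          _ = M := hM
      exact mul_le_mul hb h3 (abs_nonneg _) hCk
    have hinner : lamW - Ck / 2 * M ≤ k (p i) * W'' (p i)
        + 1 / 2 * k' (p i) * (W' (p i) - GN G N i - lamN k W' G N p) := by
      have h4 : k' (p i) * (GN G N i + lamN k W' G N p) ≤ Ck * M :=
        le_of_abs_le habs
      have hexp : k (p i) * W'' (p i)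
          + 1 / 2 * k' (p i) * (W' (p i) - GN G N i - lamN k W' G N p)
          = (k (p i) * W'' (p i) + 1 / 2 * k' (p i) * W' (p i))
            - 1 / 2 * (k' (p i) * (GN G N i + lamN k W' G N p)) := by ring
      rw [hexp]
      linarith
    have hLinf : Linf lamW Ck B1 B2 κl κu nG E = lamW - Ck / 2 * M := by
      rw [Linf, hMdef]
    rw [HN, hLinf, mul_comm]
    exact mul_le_mul_of_nonneg_left hinner (hk_pos i).le
  -- assemble
  have hsum_le : ∑ i, Linf lamW Ck B1 B2 κl κu nG E * (k (p i) * (ξ i - lamXi k N p ξ)^2)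
      ≤ ∑ i, HN k k' W' W'' G N p i * (ξ i - lamXi k N p ξ)^2 := by
    apply Finset.sum_le_sum
    intro i _
    rw [← mul_assoc]
    exact mul_le_mul_of_nonneg_right (hpt i) (sq_nonneg _)
  calc Linf lamW Ck B1 B2 κl κu nG E * ((1 / (N:ℝ)) * ∑ i, k (p i) * (ξ i - lamXi k N p ξ)^2)
      = (1 / (N:ℝ)) * (Linf lamW Ck B1 B2 κl κu nG E * ∑ i, k (p i) * (ξ i - lamXi k N p ξ)^2) := by
        ring
    _ = (1 / (N:ℝ)) * ∑ i, Linf lamW Ck B1 B2 κl κu nG E * (k (p i) * (ξ i - lamXi k N p ξ)^2) := by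
        rw [Finset.mul_sum]
    _ ≤ (1 / (N:ℝ)) * ∑ i, HN k k' W' W'' G N p i * (ξ i - lamXi k N p ξ)^2 := by
        apply mul_le_mul_of_nonneg_left hsum_le
        positivity
end
end

section
/- Grönwall-type estimate for square roots: Let λ ∈ ℝ, ρ ≥ 0 and T > 0, and let n : [0,T] → [0,∞) be continuous such that t ↦ n(t)² is differentiable on (0,T) with (d/dt)(n(t)²) ≤ −2λ·n(t)² + 2ρ·n(t) for all t ∈ (0,T). Then n(t) ≤ e^{−λt}·n(0) + M_λ(t)·ρ for all t ∈ [0,T]. -/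
open MeasureTheory Real Set Filter

noncomputable section

lemma gronwallBound_cont (K : ℝ) :
    Continuous fun p : ℝ × ℝ × ℝ => gronwallBound p.1 K p.2.1 p.2.2 := by
  unfold gronwallBound
  split_ifs
  · fun_prop
  · fun_prop

lemma slope_freq {f : ℝ → ℝ} {f' x : ℝ} (h : HasDerivAt f f' x) :
    ∀ r, f' < r → ∃ᶠ z in nhdsWithin x (Set.Ioi x), (z - x)⁻¹ * (f z - f x) < r := by
  intro r hr
  have h1 : Tendsto (slope f x) (nhdsWithin x (Set.Ioi x)) (nhds f') :=
    (hasDerivAt_iff_tendsto_slope.mp h).mono_left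
      (nhdsWithin_mono x fun z hz => (Set.mem_Ioi.mp hz).ne')
  have h2 : ∀ᶠ z in nhdsWithin x (Set.Ioi x), slope f x z < r := h1.eventually_lt_const hr
  refine (h2.mono fun z hz => ?_).frequently
  rwa [slope_def_field, div_eq_inv_mul] at hz

/-- Grönwall-type estimate for square roots: if `n ≥ 0` is continuous on `[0,T]`,
`n²` is differentiable on `(0,T)` with `(n²)' ≤ −2λn² + 2ρn`, then
`n(t) ≤ e^{−λt} n(0) + M_λ(t) ρ` where `M_λ(t) = ∫₀ᵗ e^{−λs} ds`. -/
theorem sqrt_gronwall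
    (lam ρ T : ℝ) (hρ : 0 ≤ ρ) (hT : 0 < T)
    (n : ℝ → ℝ)
    (hcont : ContinuousOn n (Set.Icc 0 T))
    (hnn : ∀ t ∈ Set.Icc (0:ℝ) T, 0 ≤ n t)
    (hdiff : ∀ t ∈ Set.Ioo (0:ℝ) T, DifferentiableAt ℝ (fun s => (n s)^2) t)
    (hbnd : ∀ t ∈ Set.Ioo (0:ℝ) T,
      deriv (fun s => (n s)^2) t ≤ -2 * lam * (n t)^2 + 2 * ρ * n t) :
    ∀ t ∈ Set.Icc (0:ℝ) T,
      n t ≤ Real.exp (-lam * t) * n 0 + (∫ s in (0:ℝ)..t, Real.exp (-lam * s)) * ρ := by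
  -- closed form / gronwallBound relation
  have hGB : ∀ δ ε x : ℝ, gronwallBound δ (-lam) ε x
      = Real.exp (-lam * x) * δ + (∫ s in (0:ℝ)..x, Real.exp (-lam * s)) * ε := by
    intro δ ε x
    by_cases hl : lam = 0
    · subst hl
      simp [gronwallBound, mul_comm]
    · have hK : (-lam) ≠ 0 := neg_ne_zero.mpr hl
      have hInt : (∫ s in (0:ℝ)..x, Real.exp (-lam * s))
          = (Real.exp (-lam * x) - 1) / (-lam) := by
        have h1 : ∀ s ∈ Set.uIcc (0:ℝ) x,
            HasDerivAt (fun y => Real.exp (-lam * y) / (-lam)) (Real.exp (-lam * s)) s := by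
          intro s _
          have := ((hasDerivAt_id s).const_mul (-lam)).exp
          simpa [mul_comm, mul_assoc, mul_div_cancel_left₀, hK, hl]
            using this.div_const (-lam)
        have := intervalIntegral.integral_eq_sub_of_hasDerivAt h1
          ((Real.continuous_exp.comp (by fun_prop)).intervalIntegrable 0 x)
        rw [this]
        rw [mul_zero, Real.exp_zero]
        ring
      rw [gronwallBound_of_K_ne_0 hK, hInt]
      ring
  intro t ht
  obtain ⟨ht0, htT⟩ := ht
  rcases eq_or_lt_of_le ht0 with h0 | htpos
  · rw [← h0]
    simp
  -- main estimate via √(n²+ε²)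
  have key : ∀ ε : ℝ, 0 < ε → ∀ a ∈ Set.Ioo (0:ℝ) t,
      Real.sqrt ((n t)^2 + ε^2)
        ≤ gronwallBound (Real.sqrt ((n a)^2 + ε^2)) (-lam) (ρ + |lam| * ε) (t - a) := by
    intro ε hε a ha
    set f : ℝ → ℝ := fun s => Real.sqrt ((n s)^2 + ε^2) with hf
    set f' : ℝ → ℝ := fun s =>
      deriv (fun y => (n y)^2) s / (2 * Real.sqrt ((n s)^2 + ε^2)) with hf'
    have hIccsub : Set.Icc a t ⊆ Set.Icc 0 T :=
      Set.Icc_subset_Icc ha.1.le htT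
    have hIcosub : Set.Ico a t ⊆ Set.Ioo 0 T :=
      fun x hx => ⟨lt_of_lt_of_le ha.1 hx.1, lt_of_lt_of_le hx.2 htT⟩
    have hpos : ∀ x, (0:ℝ) < (n x)^2 + ε^2 := fun x => by positivity
    have hDeriv : ∀ x ∈ Set.Ico a t, HasDerivAt f (f' x) x := by
      intro x hx
      have h1 : HasDerivAt (fun y => (n y)^2 + ε^2)
          (deriv (fun y => (n y)^2) x) x :=
        ((hdiff x (hIcosub hx)).hasDerivAt).add_const (ε^2)
      have := h1.sqrt (ne_of_gt (hpos x))
      simpa [f, f'] using this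
    have hfc : ContinuousOn f (Set.Icc a t) := by
      apply ContinuousOn.sqrt
      exact ((hcont.mono hIccsub).pow 2).add continuousOn_const
    have hsq : ∀ x, Real.sqrt ((n x)^2 + ε^2) > 0 :=
      fun x => Real.sqrt_pos.mpr (hpos x)
    have hbound : ∀ x ∈ Set.Ico a t, f' x ≤ (-lam) * f x + (ρ + |lam| * ε) := by
      intro x hx
      have hxT := hIcosub hx
      have hu : 0 ≤ n x := hnn x (Set.Ioo_subset_Icc_self hxT)
      set s := Real.sqrt ((n x)^2 + ε^2) with hs
      have hspos : 0 < s := hsq x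
      have hs2 : s^2 = (n x)^2 + ε^2 := Real.sq_sqrt (hpos x).le
      have hsu : n x ≤ s := by
        rw [hs, show (n x)^2 + ε^2 = (n x)^2 + ε^2 from rfl]
        nlinarith [Real.sq_sqrt (hpos x).le, Real.sqrt_nonneg ((n x)^2 + ε^2)]
      have hse : ε ≤ s := by
        nlinarith [Real.sq_sqrt (hpos x).le, Real.sqrt_nonneg ((n x)^2 + ε^2)]
      have h1 : f' x ≤ (-2 * lam * (n x)^2 + 2 * ρ * n x) / (2 * s) :=
        (div_le_div_iff_of_pos_right (mul_pos two_pos hspos)).mpr (hbnd x hxT)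
      have h2 : (-2 * lam * (n x)^2 + 2 * ρ * n x) / (2 * s)
          ≤ (-lam) * s + (ρ + |lam| * ε) := by
        rw [div_le_iff₀ (by positivity)]
        have hls : lam * s^2 = lam * (n x)^2 + lam * ε^2 := by rw [hs2]; ring
        nlinarith [mul_nonneg hρ (sub_nonneg.mpr hsu),
          mul_nonneg (mul_nonneg (abs_nonneg lam) hε.le) (sub_nonneg.mpr hse),
          mul_nonneg (sub_nonneg.mpr (le_abs_self lam)) (sq_nonneg ε), hls]
      calc f' x ≤ _ := h1
        _ ≤ _ := h2
    have := le_gronwallBound_of_liminf_deriv_right_le hfc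
      (fun x hx => slope_freq (hDeriv x hx)) (le_refl (f a)) hbound t ⟨ha.2.le, le_rfl⟩
    exact this
  -- limit a → 0⁺
  have key2 : ∀ ε : ℝ, 0 < ε →
      Real.sqrt ((n t)^2 + ε^2)
        ≤ gronwallBound (Real.sqrt ((n 0)^2 + ε^2)) (-lam) (ρ + |lam| * ε) t := by
    intro ε hε
    have hsub : Set.Ioo (0:ℝ) t ⊆ Set.Icc 0 T :=
      fun x hx => ⟨hx.1.le, hx.2.le.trans htT⟩
    haveI : (nhdsWithin (0:ℝ) (Set.Ioo 0 t)).NeBot := by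
      apply mem_closure_iff_nhdsWithin_neBot.mp
      rw [closure_Ioo (ne_of_lt htpos)]
      exact ⟨le_rfl, htpos.le⟩
    have hδ : ContinuousWithinAt (fun a => Real.sqrt ((n a)^2 + ε^2)) (Set.Ioo 0 t) 0 := by
      apply ContinuousWithinAt.sqrt
      exact (((hcont 0 ⟨le_rfl, hT.le⟩).mono hsub).pow 2).add continuousWithinAt_const
    have hG : ContinuousWithinAt
        (fun a => gronwallBound (Real.sqrt ((n a)^2 + ε^2)) (-lam) (ρ + |lam| * ε) (t - a))
        (Set.Ioo 0 t) 0 := by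
      exact (gronwallBound_cont (-lam)).continuousAt.comp_continuousWithinAt
        (hδ.prodMk (continuousWithinAt_const.prodMk
          (continuousWithinAt_const.sub continuousWithinAt_id)))
    have := ge_of_tendsto hG
      (eventually_nhdsWithin_of_forall (fun a ha => key ε hε a ha))
    simpa using this
  -- limit ε → 0⁺
  have key3 : n t ≤ gronwallBound (n 0) (-lam) ρ t := by
    have hL : Tendsto (fun ε => Real.sqrt ((n t)^2 + ε^2)) (nhdsWithin 0 (Set.Ioi 0))
        (nhds (n t)) := by
      have hc : ContinuousAt (fun ε : ℝ => Real.sqrt ((n t)^2 + ε^2)) 0 := by fun_prop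
      simpa [ContinuousWithinAt, Real.sqrt_sq (hnn t ⟨ht0, htT⟩)]
        using hc.continuousWithinAt (s := Set.Ioi (0:ℝ))
    have hR : Tendsto
        (fun ε => gronwallBound (Real.sqrt ((n 0)^2 + ε^2)) (-lam) (ρ + |lam| * ε) t)
        (nhdsWithin 0 (Set.Ioi 0)) (nhds (gronwallBound (n 0) (-lam) ρ t)) := by
      have hc : ContinuousAt
          (fun ε : ℝ => gronwallBound (Real.sqrt ((n 0)^2 + ε^2)) (-lam) (ρ + |lam| * ε) t)
          0 := by
        show ContinuousAt ((fun p : ℝ × ℝ × ℝ => gronwallBound p.1 (-lam) p.2.1 p.2.2) ∘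
          (fun ε : ℝ => (Real.sqrt ((n 0)^2 + ε^2), ρ + |lam| * ε, t))) 0
        exact (gronwallBound_cont (-lam)).continuousAt.comp (by fun_prop)
      have := hc.continuousWithinAt (s := Set.Ioi (0:ℝ))
      simpa [ContinuousWithinAt, Real.sqrt_sq (hnn 0 ⟨le_rfl, hT.le⟩)] using this
    exact le_of_tendsto_of_tendsto hL hR
      (eventually_nhdsWithin_of_forall (fun ε hε => key2 ε hε))
  rw [hGB] at key3
  exact key3
end
end
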